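/- arXiv:1310.5201 — 8 statements merged into one kernel-verified Lean document; each statement's English description precedes it below -/
import Mathlib

section
/- Fix nonnegative integers a < b and set n = a+b. Let S be the set of words s = (s_1,…,s_n) ∈ {−1,+1}^n with exactly a letters equal to −1 and b letters equal to +1, let C_L : S → S be the leftward cyclic shift sending (s_1,s_2,…,s_n) to (s_2,…,s_n,s_1), and let f(s) = 1 if s_1 + s_2 + ⋯ + s_i > 0 for all 1 ≤ i ≤ n and f(s) = 0 otherwise. Then for every C_L-orbit O ⊆ S, (1/#O)·Σ_{s∈O} f(s) = (b−a)/(b+a); i.e., f is (b−a)/(b+a)-mesic under C_L. -/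
/-- Ballot property: every nonempty prefix has positive sum. -/
def Ball (l : List ℤ) : Prop := ∀ i : ℕ, 0 < i → i ≤ l.length → 0 < (l.take i).sum

instance BallDec : DecidablePred Ball := fun l =>
  have h : Decidable (∀ i ∈ Finset.Icc 1 l.length, 0 < (l.take i).sum) := by infer_instance
  @decidable_of_iff _ _ (by
    simp only [Ball, Finset.mem_Icc]
    constructor
    · intro h i h1 h2; exact h i ⟨h1, h2⟩
    · intro h i hi; exact h i hi.1 hi.2) h

lemma sum_take_append (u w : List ℤ) (i : ℕ) :
    ((u ++ w).take i).sum = (u.take i).sum + (w.take (i - u.length)).sum := by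
  rw [List.take_append, List.sum_append]

lemma ball_middle (u v : List ℤ) (hu : u ≠ []) :
    Ball (u ++ 1 :: -1 :: v) ↔ Ball (u ++ v) := by
  have hul : 0 < u.length := List.length_pos_iff.2 hu
  constructor
  · intro hb i hi hlen
    rw [List.length_append] at hlen
    rw [sum_take_append]
    rcases le_or_gt i u.length with h | h
    · have := hb i hi (by simp; omega)
      rw [sum_take_append] at this
      have e : i - u.length = 0 := by omega
      rw [e] at this ⊢
      simpa using this
    · have := hb (i + 2) (by omega) (by simp; omega)
      rw [sum_take_append] at this
      have e1 : u.take (i + 2) = u.take i := by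
        rw [List.take_of_length_le (by omega), List.take_of_length_le (by omega)]
      have e2 : i + 2 - u.length = (i - u.length) + 2 := by omega
      rw [e1, e2, List.take_succ_cons, List.take_succ_cons] at this
      simpa using this
  · intro hb i hi hlen
    rw [List.length_append] at hlen
    rw [sum_take_append]
    have husum : 0 < u.sum := by
      have := hb u.length hul (by simp)
      rw [sum_take_append, List.take_length, Nat.sub_self] at this
      simpa using this
    rcases le_or_gt i u.length with h | h
    · have := hb i hi (by simp; omega)
      rw [sum_take_append] at this
      have e : i - u.length = 0 := by omega
      rw [e] at this ⊢
      simpa using this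
    · have hti : u.take i = u := List.take_of_length_le (by omega)
      rcases Nat.lt_or_ge i (u.length + 2) with h2 | h2
      · have e : i - u.length = 1 := by omega
        rw [e, hti]
        simp
        omega
      · have e : i - u.length = (i - u.length - 2) + 2 := by omega
        rw [e, List.take_succ_cons, List.take_succ_cons, hti]
        have := hb (u.length + (i - u.length - 2)) (by omega) (by simp at hlen ⊢; omega)
        rw [sum_take_append, List.take_of_length_le (by omega),
          Nat.add_sub_cancel_left] at this
        simp only [List.sum_cons]
        linarith

/-- Number of ballot rotations (as an indicator sum). -/
def cnt (l : List ℤ) : ℕ := ∑ k ∈ Finset.range l.length, if Ball (l.rotate k) then 1 else 0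

lemma sum_shift (g : ℕ → ℕ) (n : ℕ) (hg : g n = g 0) :
    ∑ k ∈ Finset.range n, g (k + 1) = ∑ k ∈ Finset.range n, g k := by
  have h1 := Finset.sum_range_succ g n
  have h2 := Finset.sum_range_succ' g n
  omega

lemma rotate_add_length (l : List ℤ) (k : ℕ) : l.rotate (k + l.length) = l.rotate k := by
  rw [← List.rotate_rotate]
  conv_lhs => rw [← List.length_rotate l k]
  exact List.rotate_length _

lemma cnt_rotate_one (l : List ℤ) : cnt (l.rotate 1) = cnt l := by
  unfold cnt
  rw [List.length_rotate]
  have : ∀ k, (if Ball ((l.rotate 1).rotate k) then 1 else 0) =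
      (fun j => if Ball (l.rotate j) then 1 else 0) (k + 1) := by
    intro k
    rw [List.rotate_rotate, Nat.add_comm 1 k]
  rw [Finset.sum_congr rfl (fun k _ => this k)]
  refine sum_shift (fun j => if Ball (l.rotate j) then 1 else 0) l.length ?_
  simp only [List.rotate_length, List.rotate_zero]

lemma cnt_rotate (l : List ℤ) (j : ℕ) : cnt (l.rotate j) = cnt l := by
  induction j with
  | zero => rw [List.rotate_zero]
  | succ j ih =>
    rw [← ih, ← List.rotate_rotate]
    exact cnt_rotate_one _

lemma sum_rotate (l : List ℤ) (j : ℕ) : (l.rotate j).sum = l.sum :=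
  (List.rotate_perm l j).sum_eq

lemma cnt_cons_pair (t : List ℤ) : cnt (1 :: -1 :: t) = cnt t := by
  unfold cnt
  set l : List ℤ := 1 :: -1 :: t with hl
  have hlen : l.length = t.length + 2 := by simp [hl]
  rw [hlen, Finset.sum_range_succ', Finset.sum_range_succ']
  have h0 : ¬ Ball (l.rotate 0) := by
    rw [List.rotate_zero]
    intro h
    have := h 2 (by omega) (by simp [hl])
    simp [hl] at this
  have h1 : ¬ Ball (l.rotate 1) := by
    intro h
    have := h 1 (by omega) (by simp [hl])
    rw [List.rotate_eq_drop_append_take (by simp [hl])] at this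
    simp [hl] at this
  rw [if_neg h0, if_neg h1]
  have key : ∀ j < t.length, Ball (l.rotate (j + 1 + 1)) ↔ Ball (t.rotate j) := by
    intro j hj
    have hrot : l.rotate (j + 1 + 1) = t.drop j ++ 1 :: -1 :: t.take j := by
      rw [List.rotate_eq_drop_append_take (by simp [hl]; omega)]
      simp [hl, List.take_succ_cons]
    have hrot' : t.rotate j = t.drop j ++ t.take j :=
      List.rotate_eq_drop_append_take (by omega)
    rw [hrot, hrot']
    exact ball_middle _ _ (by rw [Ne, List.drop_eq_nil_iff]; omega)
  have : ∀ j ∈ Finset.range t.length,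
      (if Ball (l.rotate (j + 1 + 1)) then 1 else 0) = if Ball (t.rotate j) then 1 else 0 := by
    intro j hj
    rw [Finset.mem_range] at hj
    rw [if_congr (key j hj) rfl rfl]
  rw [Finset.sum_congr rfl this]
  omega

lemma getElem_ne_of_lt_indexOf {α} [DecidableEq α] {a : α} :
    ∀ (l : List α) (i : ℕ) (h : i < l.length), i < l.idxOf a → l[i] ≠ a := by
  intro l
  induction l with
  | nil => simp
  | cons b t ih =>
    intro i h hi
    cases i with
    | zero =>
      intro he
      simp only [List.getElem_cons_zero] at he
      subst he
      simp [List.idxOf_cons_self] at hi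
    | succ i =>
      rcases eq_or_ne b a with rfl | hba
      · simp [List.idxOf_cons_self] at hi
      · rw [List.idxOf_cons_ne _ hba] at hi
        simpa using ih i (by simpa using h) (by omega)

lemma exists_rot_of_head (l : List ℤ) (hmem : ∀ x ∈ l, x = 1 ∨ x = -1)
    (hpos : 0 < l.length) (h0 : l[0]'hpos = 1) (hm : (-1:ℤ) ∈ l) :
    ∃ j t, l.rotate j = 1 :: -1 :: t := by
  obtain ⟨j, hj⟩ : ∃ j, j = l.idxOf (-1) := ⟨_, rfl⟩
  have hjlt : j < l.length := by rw [hj]; exact List.idxOf_lt_length_iff.2 hm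
  have hjget : l[j]'hjlt = -1 := by subst hj; exact List.getElem_idxOf _
  have hj0 : j ≠ 0 := by
    intro h
    have : l[0]'hpos = -1 := by
      have := hjget
      simp only [h] at this
      exact this
    rw [h0] at this
    norm_num at this
  have hprev : l[j-1]'(by omega) = 1 := by
    have hne : l[j-1]'(by omega) ≠ -1 :=
      getElem_ne_of_lt_indexOf l (j-1) (by omega) (by rw [← hj]; omega)
    rcases hmem _ (List.getElem_mem _) with h | h
    · exact h
    · exact absurd h hne
  rcases e : l.rotate (j-1) with _ | ⟨x, _ | ⟨y, u⟩⟩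
  · have := congrArg List.length e
    rw [List.length_rotate] at this
    simp only [List.length_nil] at this
    omega
  · have := congrArg List.length e
    rw [List.length_rotate] at this
    simp only [List.length_cons, List.length_nil] at this
    omega
  · have hx : x = 1 := by
      have h0' : (l.rotate (j-1))[0]'(by rw [List.length_rotate]; omega) = (1:ℤ) := by
        rw [List.getElem_rotate]
        have e2 : (0 + (j-1)) % l.length = j - 1 := by
          rw [Nat.zero_add, Nat.mod_eq_of_lt (by omega)]
        simp only [e2]
        exact hprev
      simp only [e, List.getElem_cons_zero] at h0'
      exact h0'
    have hy : y = -1 := by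
      have h1' : (l.rotate (j-1))[1]'(by rw [List.length_rotate]; omega) = (-1:ℤ) := by
        rw [List.getElem_rotate]
        have e2 : (1 + (j-1)) % l.length = j := by
          rw [Nat.mod_eq_of_lt (by omega)]
          omega
        simp only [e2]
        exact hjget
      simp only [e, List.getElem_cons_succ, List.getElem_cons_zero] at h1'
      exact h1'
    exact ⟨j-1, u, by rw [e, hx, hy]⟩

lemma exists_rot (l : List ℤ) (hmem : ∀ x ∈ l, x = 1 ∨ x = -1)
    (h1 : (1:ℤ) ∈ l) (hm : (-1:ℤ) ∈ l) :
    ∃ j t, l.rotate j = 1 :: -1 :: t := by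
  obtain ⟨i1, hget⟩ := List.mem_iff_get.1 h1
  have hpos : 0 < (l.rotate i1.val).length := by
    rw [List.length_rotate]; exact i1.pos
  have h0 : (l.rotate i1.val)[0]'hpos = 1 := by
    rw [List.getElem_rotate]
    have e : (0 + i1.val) % l.length = i1.val := by
      rw [Nat.zero_add, Nat.mod_eq_of_lt i1.isLt]
    simp only [e]
    simpa [List.get_eq_getElem] using hget
  obtain ⟨j, t, h⟩ := exists_rot_of_head (l.rotate i1.val)
    (fun x hx => hmem x (List.mem_rotate.1 hx)) hpos h0 (List.mem_rotate.2 hm)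
  exact ⟨i1.val + j, t, by rw [← List.rotate_rotate]; exact h⟩

lemma ball_of_ones (m : List ℤ) (h : ∀ x ∈ m, x = 1) (hne : m ≠ []) : Ball m := by
  intro i hi hile
  have := List.sum_eq_card_nsmul (m.take i) 1 (fun x hx => h x (List.mem_of_mem_take hx))
  rw [this, List.length_take]
  simp
  omega

lemma cycle_lemma_aux : ∀ N, ∀ l : List ℤ, l.length ≤ N →
    (∀ x ∈ l, x = 1 ∨ x = -1) → 0 < l.sum → (cnt l : ℤ) = l.sum := by
  intro N
  induction N with
  | zero =>
    intro l hl hmem hs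
    have hl0 : l = [] := List.length_eq_zero_iff.1 (by omega)
    subst hl0
    norm_num at hs
  | succ N ih =>
    intro l hl hmem hs
    have hne : l ≠ [] := by rintro rfl; norm_num at hs
    by_cases hneg : (-1:ℤ) ∈ l
    · have h1 : (1:ℤ) ∈ l := by
        by_contra h1
        have : ∀ x ∈ l, x = -1 := by
          intro x hx
          rcases hmem x hx with h | h
          · exact absurd (h ▸ hx) h1
          · exact h
        have := List.sum_eq_card_nsmul l (-1) this
        rw [this] at hs
        simp at hs
        omega
      obtain ⟨j, t, hrot⟩ := exists_rot l hmem h1 hneg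
      have hlent : l.length = t.length + 2 := by
        have := congrArg List.length hrot
        rw [List.length_rotate] at this
        simpa using this
      have hsumt : t.sum = l.sum := by
        have := congrArg List.sum hrot
        rw [sum_rotate] at this
        simp at this
        linarith
      have hmemt : ∀ x ∈ t, x = 1 ∨ x = -1 := by
        intro x hx
        have : x ∈ l.rotate j := by rw [hrot]; simp [hx]
        exact hmem x (List.mem_rotate.1 this)
      have := ih t (by omega) hmemt (by omega)
      rw [← cnt_rotate l j, hrot, cnt_cons_pair, this, hsumt]
    · have hones : ∀ x ∈ l, x = (1:ℤ) := by
        intro x hx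
        rcases hmem x hx with h | h
        · exact h
        · exact absurd (h ▸ hx) hneg
      have hball : ∀ k, Ball (l.rotate k) := by
        intro k
        refine ball_of_ones _ (fun x hx => hones x (List.mem_rotate.1 hx)) ?_
        intro h
        apply hne
        have := congrArg List.length h
        rw [List.length_rotate] at this
        exact List.length_eq_zero_iff.1 (by simpa using this)
      have hcnt : cnt l = l.length := by
        unfold cnt
        rw [Finset.sum_congr rfl (fun k _ => if_pos (hball k))]
        simp
      rw [hcnt, List.sum_eq_card_nsmul l 1 hones]
      simp

lemma ofFn_rot (m : ℕ) (y : Fin (m+1) → ℤ) :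
    List.ofFn (fun i => y (finRotate (m+1) i)) = (List.ofFn y).rotate 1 := by
  apply List.ext_getElem (by simp)
  intro i h1 h2
  rw [List.getElem_ofFn, List.getElem_rotate, List.getElem_ofFn]
  congr 1
  rw [finRotate_succ_apply]
  apply Fin.ext
  rw [Fin.val_add]
  simp only [List.length_ofFn] at h1 h2 ⊢
  rw [Fin.val_one']
  conv_rhs => rw [Nat.add_mod]
  rw [Nat.add_mod i (1 % (m+1)), Nat.mod_mod_of_dvd _ dvd_rfl]

theorem ballot_homomesy
    (a b : ℕ) (hab : a < b) (n : ℕ) (hn : n = a + b)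
    (τ : (Fin n → ℤ) → (Fin n → ℤ))
    (hτ : ∀ (s : Fin n → ℤ) (i : Fin n), τ s i = s (finRotate n i))
    (f : (Fin n → ℤ) → ℚ)
    (hf : ∀ s : Fin n → ℤ,
      f s = if (∀ i : Fin n,
          0 < ∑ j ∈ Finset.univ.filter (fun j : Fin n => j ≤ i), s j)
        then 1 else 0)
    (O : Finset (Fin n → ℤ))
    (hO : ∃ s : Fin n → ℤ,
      (∀ i, s i = 1 ∨ s i = -1) ∧
      (Finset.univ.filter (fun i => s i = -1)).card = a ∧
      (Finset.univ.filter (fun i => s i = 1)).card = b ∧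
      (∀ y, y ∈ O ↔ ∃ k : ℕ, τ^[k] s = y)) :
    (∑ s ∈ O, f s) / O.card = ((b : ℚ) - (a : ℚ)) / ((b : ℚ) + (a : ℚ)) := by
  obtain ⟨s, hpm, hca, hcb, hOm⟩ := hO
  have hn0 : 0 < n := by omega
  -- f in terms of Ball
  have hfB : ∀ y : Fin n → ℤ, f y = if Ball (List.ofFn y) then 1 else 0 := by
    intro y
    rw [hf y]
    refine if_congr ?_ rfl rfl
    constructor
    · intro h i hi hile
      rw [List.length_ofFn] at hile
      have hx := h ⟨i - 1, by omega⟩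
      have e : (Finset.univ.filter (fun j : Fin n => j ≤ (⟨i-1, by omega⟩ : Fin n)))
          = (Finset.univ.filter (fun j : Fin n => (j:ℕ) < i)) := by
        ext j
        simp only [Finset.mem_filter, Finset.mem_univ, true_and, Fin.le_def]
        omega
      rw [e] at hx
      rw [List.sum_take_ofFn]
      exact hx
    · intro h i
      have hx := h (i.val + 1) (by omega) (by rw [List.length_ofFn]; omega)
      rw [List.sum_take_ofFn] at hx
      have e : (Finset.univ.filter (fun j : Fin n => (j:ℕ) < i.val + 1))
          = (Finset.univ.filter (fun j : Fin n => j ≤ i)) := by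
        ext j
        simp only [Finset.mem_filter, Finset.mem_univ, true_and, Fin.le_def]
        omega
      rw [e] at hx
      exact hx
  -- iterates correspond to rotations
  have hrot1 : ∀ y : Fin n → ℤ, List.ofFn (τ y) = (List.ofFn y).rotate 1 := by
    obtain ⟨m, rfl⟩ : ∃ m, n = m + 1 := ⟨n - 1, by omega⟩
    intro y
    have : τ y = fun i => y (finRotate (m+1) i) := funext (hτ y)
    rw [this]
    exact ofFn_rot m y
  have hofn : ∀ k, List.ofFn (τ^[k] s) = (List.ofFn s).rotate k := by
    intro k
    induction k with
    | zero => simp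
    | succ k ih =>
      rw [Function.iterate_succ_apply', hrot1, ih, List.rotate_rotate]
  have hper : Function.IsPeriodicPt τ n s := by
    show τ^[n] s = s
    apply List.ofFn_injective
    rw [hofn n]
    simpa using List.rotate_length (List.ofFn s)
  have hppos : 0 < Function.minimalPeriod τ s := hper.minimalPeriod_pos hn0
  have hpdvd : Function.minimalPeriod τ s ∣ n := hper.minimalPeriod_dvd
  set p := Function.minimalPeriod τ s with hp
  have hOint : O = Finset.image (fun k => τ^[k] s) (Finset.range p) := by
    ext y
    rw [hOm y]
    simp only [Finset.mem_image, Finset.mem_range]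
    constructor
    · rintro ⟨k, rfl⟩
      exact ⟨k % p, Nat.mod_lt _ hppos, Function.iterate_mod_minimalPeriod_eq⟩
    · rintro ⟨k, _, hk⟩
      exact ⟨k, hk⟩
  have hinj : ∀ x ∈ Finset.range p, ∀ y ∈ Finset.range p, τ^[x] s = τ^[y] s → x = y := by
    intro x hx y hy hxy
    exact Function.iterate_injOn_Iio_minimalPeriod
      (by simpa [Set.mem_Iio] using hx) (by simpa [Set.mem_Iio] using hy) hxy
  have hcard : O.card = p := by
    rw [hOint, Finset.card_image_of_injOn (by
      rw [Finset.coe_range]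
      exact Function.iterate_injOn_Iio_minimalPeriod), Finset.card_range]
  have hsum1 : ∑ y ∈ O, f y = ∑ k ∈ Finset.range p, f (τ^[k] s) := by
    rw [hOint]
    exact Finset.sum_image hinj
  -- periodicity of k ↦ f (τ^[k] s)
  have hstep : ∀ k, f (τ^[k + p] s) = f (τ^[k] s) := by
    intro k
    rw [Function.iterate_add_apply, hp, Function.iterate_minimalPeriod]
  have hper2 : ∀ x m : ℕ, f (τ^[x + m * p] s) = f (τ^[x] s) := by
    intro x m
    induction m with
    | zero => simp
    | succ m ih =>
      have e : x + (m+1)*p = (x + m*p) + p := by ring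
      rw [e, hstep, ih]
  have hblocks : ∀ m : ℕ, ∑ k ∈ Finset.range (m * p), f (τ^[k] s)
      = (m : ℚ) * ∑ k ∈ Finset.range p, f (τ^[k] s) := by
    intro m
    induction m with
    | zero => simp
    | succ m ih =>
      have e : (m+1) * p = m*p + p := by ring
      rw [e, Finset.sum_range_add, ih]
      have : ∀ x ∈ Finset.range p, f (τ^[m*p + x] s) = f (τ^[x] s) := by
        intro x _
        rw [Nat.add_comm, hper2 x m]
      rw [Finset.sum_congr rfl this]
      push_cast
      ring
  have htot := hblocks (n / p)
  rw [Nat.div_mul_cancel hpdvd] at htot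
  -- cycle lemma
  have hmemL : ∀ x ∈ List.ofFn s, x = 1 ∨ x = -1 := by
    intro x hx
    rw [List.mem_ofFn] at hx
    obtain ⟨i, rfl⟩ := hx
    exact hpm i
  have hsumL : (List.ofFn s).sum = (b : ℤ) - (a : ℤ) := by
    rw [List.sum_ofFn]
    have hsplit : (Finset.univ : Finset (Fin n))
        = (Finset.univ.filter (fun i => s i = 1)) ∪ (Finset.univ.filter (fun i => s i = -1)) := by
      ext i
      simp only [Finset.mem_union, Finset.mem_filter, Finset.mem_univ, true_and]
      have := hpm i
      tauto
    have hdisj : Disjoint (Finset.univ.filter (fun i => s i = 1))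
        (Finset.univ.filter (fun i => s i = -1)) := by
      rw [Finset.disjoint_left]
      intro i h1 h2
      rw [Finset.mem_filter] at h1 h2
      rw [h1.2] at h2
      norm_num at h2
    rw [hsplit, Finset.sum_union hdisj,
      Finset.sum_congr rfl (fun i hi => (Finset.mem_filter.1 hi).2),
      Finset.sum_congr rfl (fun i hi => (Finset.mem_filter.1 hi).2),
      Finset.sum_const, Finset.sum_const, hca, hcb]
    simp
    ring
  have hLpos : 0 < (List.ofFn s).sum := by
    rw [hsumL]
    have : (a:ℤ) < (b:ℤ) := by exact_mod_cast hab
    omega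
  have hcnt : (cnt (List.ofFn s) : ℤ) = (b:ℤ) - a := by
    rw [cycle_lemma_aux (List.ofFn s).length _ le_rfl hmemL hLpos, hsumL]
  have hsumn : ∑ k ∈ Finset.range n, f (τ^[k] s) = ((b:ℚ) - a) := by
    have h1 : ∀ k ∈ Finset.range n, f (τ^[k] s)
        = if Ball ((List.ofFn s).rotate k) then (1:ℚ) else 0 := by
      intro k _
      rw [hfB, hofn]
    rw [Finset.sum_congr rfl h1]
    have h2 : (∑ k ∈ Finset.range n, if Ball ((List.ofFn s).rotate k) then (1:ℚ) else 0)
        = ((cnt (List.ofFn s) : ℤ) : ℚ) := by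
      unfold cnt
      rw [List.length_ofFn]
      push_cast
      exact Finset.sum_congr rfl (fun k _ => by norm_num)
    rw [h2, hcnt]
    push_cast
    ring
  -- assemble
  rw [hsum1, hcard]
  set S := ∑ k ∈ Finset.range p, f (τ^[k] s) with hS
  have hqs : ((n / p : ℕ) : ℚ) * S = (b:ℚ) - a := by
    rw [← htot, hsumn]
  have hq : ((n / p : ℕ) : ℚ) * (p : ℚ) = (n : ℚ) := by
    exact_mod_cast congrArg (Nat.cast : ℕ → ℚ) (Nat.div_mul_cancel hpdvd)
  have hncast : (n : ℚ) = (a : ℚ) + b := by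
    exact_mod_cast congrArg (Nat.cast : ℕ → ℚ) hn
  have hpne : (p : ℚ) ≠ 0 := by
    exact_mod_cast Nat.pos_iff_ne_zero.1 hppos
  have hbane : (b : ℚ) + (a : ℚ) ≠ 0 := by
    have hb : (0:ℚ) < b := by exact_mod_cast (by omega : 0 < b)
    have ha : (0:ℚ) ≤ a := Nat.cast_nonneg a
    linarith
  rw [div_eq_div_iff hpne hbane]
  linear_combination (p:ℚ) * hqs - S * hq - S * hncast
end

section
/- Fix nonnegative integers a, b and set n = a+b. Let S be the set of words s = (s_1,…,s_n) ∈ {−1,+1}^n with exactly a letters equal to −1 and b letters equal to +1, let C_L : S → S be the leftward cyclic shift sending (s_1,s_2,…,s_n) to (s_2,…,s_n,s_1), and let inv(s) = #{(i,j) : 1 ≤ i < j ≤ n, s_i > s_j}. Then for every C_L-orbit O ⊆ S, (1/#O)·Σ_{s∈O} inv(s) = ab/2; i.e., the inversion statistic is ab/2-mesic under cyclic rotation. -/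
/-!
Every point of the orbit `O` is hit equally often, namely `n / #O` times, by the `n` iterates
`τ^[k] s` with `k < n`, so it suffices that the inversion numbers of the `n` rotations of `s` sum
to `n * a * b / 2`. Write `inversions (toDual ∘ t)` for the coinversions of a word `t`. Every pair
of a `1` and a `-1` in `t` is either an inversion or a coinversion, so their sum is `a * b`. For
`±1`-words `2 * ([t q < t p] - [t p < t q]) = t p - t q`, so twice their difference is
`∑ p < q, (t p - t q)`; summed over all rotations this vanishes, since every position runs
through every letter of `s` exactly once.
-/

open Finset Function OrderDual Fin.NatCast

section Orbit

variable {α M : Type*} [AddCommMonoid M]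

theorem Function.Periodic.sum_range_mul {g : ℕ → M} {p : ℕ} (hg : Periodic g p) (q : ℕ) :
    ∑ k ∈ range (p * q), g k = q • ∑ k ∈ range p, g k := by
  induction q with
  | zero => simp
  | succ q ih =>
    rw [Nat.mul_succ, sum_range_add, ih, succ_nsmul]
    congr 1
    refine sum_congr rfl fun k _ => ?_
    rw [add_comm, mul_comm]
    exact hg.nat_mul q k

variable {f : α → α} {x : α} {O : Finset α}

theorem eq_image_range_minimalPeriod [DecidableEq α] (hx : x ∈ periodicPts f)
    (hO : ∀ y, y ∈ O ↔ ∃ k, f^[k] x = y) :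
    O = (range (minimalPeriod f x)).image (f^[·] x) := by
  ext y
  simp only [hO, mem_image, mem_range]
  constructor
  · rintro ⟨k, rfl⟩
    exact ⟨k % minimalPeriod f x, Nat.mod_lt _ (minimalPeriod_pos_of_mem_periodicPts hx),
      iterate_mod_minimalPeriod_eq⟩
  · rintro ⟨k, -, rfl⟩
    exact ⟨k, rfl⟩

theorem card_nsmul_sum_range_iterate {N : ℕ} (hN : IsPeriodicPt f N x) (hN0 : 0 < N)
    (hO : ∀ y, y ∈ O ↔ ∃ k, f^[k] x = y) (g : α → M) :
    #O • ∑ k ∈ range N, g (f^[k] x) = N • ∑ y ∈ O, g y := by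
  classical
  have hinj : Set.InjOn (f^[·] x) (range (minimalPeriod f x)) := by
    simpa using iterate_injOn_Iio_minimalPeriod
  have hperiodic : Periodic (fun k => g (f^[k] x)) (minimalPeriod f x) := fun k => by
    simp only [iterate_add_minimalPeriod_eq]
  obtain ⟨q, hq⟩ := hN.minimalPeriod_dvd
  rw [eq_image_range_minimalPeriod ⟨N, hN0, hN⟩ hO, card_image_of_injOn hinj, sum_image hinj,
    card_range, hq, hperiodic.sum_range_mul, smul_smul]

end Orbit

section AddGroup

variable {ι : Type*} [Fintype ι] [AddGroup ι]

theorem sum_sum_sub_comp_add_eq_zero {G : Type*} [AddCommGroup G]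
    (P : Finset (ι × ι)) (s : ι → G) :
    ∑ κ, ∑ x ∈ P, (s (x.1 + κ) - s (x.2 + κ)) = 0 := by
  have hshift : ∀ a, ∑ κ, s (a + κ) = ∑ κ, s κ := fun a => Equiv.sum_comp (Equiv.addLeft a) s
  rw [sum_comm]
  exact sum_eq_zero fun x _ => by rw [sum_sub_distrib, hshift, hshift, sub_self]

theorem card_filter_comp_add_right {β : Type*} [DecidableEq β]
    (s : ι → β) (κ : ι) (v : β) : #{i | s (i + κ) = v} = #{i | s i = v} :=
  card_equiv (Equiv.addRight κ) fun i => by simp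

end AddGroup

theorem card_lt_eq_card_mul_card {ι : Type*} [Fintype ι] (t : ι → ℤ)
    (ht : ∀ i, t i = 1 ∨ t i = -1) :
    #{x : ι × ι | t x.2 < t x.1} = #{i | t i = 1} * #{i | t i = -1} := by
  rw [← card_product, ← filter_product, ← univ_product_univ]
  congr 1
  ext x
  rcases ht x.1 with h1 | h1 <;> rcases ht x.2 with h2 | h2 <;> simp [h1, h2]

section Inversions

variable {ι α : Type*} [Fintype ι] [LinearOrder ι] [LinearOrder α]

def inversions (t : ι → α) : ℕ := #{x : ι × ι | x.1 < x.2 ∧ t x.2 < t x.1}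

theorem inversions_add_inversions_toDual (t : ι → α) :
    inversions t + inversions (toDual ∘ t) = #{x : ι × ι | t x.2 < t x.1} := by
  have hswap : inversions (toDual ∘ t) = #{x : ι × ι | ¬ x.1 < x.2 ∧ t x.2 < t x.1} := by
    refine card_equiv (Equiv.prodComm ι ι) fun x => ?_
    simp only [mem_filter, mem_univ, true_and, comp_apply, toDual_lt_toDual,
      Equiv.prodComm_apply, Prod.fst_swap, Prod.snd_swap, not_lt]
    exact and_congr_left fun h => ⟨le_of_lt, fun hle => hle.lt_of_ne (ne_of_apply_ne t h.ne)⟩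
  rw [hswap]
  conv_rhs => rw [← card_filter_add_card_filter_not (fun x : ι × ι => x.1 < x.2)]
  simp only [inversions, filter_filter, and_comm]

theorem two_mul_inversions_sub_inversions_toDual (t : ι → ℤ) (ht : ∀ i, t i = 1 ∨ t i = -1) :
    2 * ((inversions t : ℤ) - inversions (toDual ∘ t)) =
      ∑ x : ι × ι with x.1 < x.2, (t x.1 - t x.2) := by
  simp only [inversions, ← filter_filter, natCast_card_filter, ← sum_sub_distrib, mul_sum,
    comp_apply, toDual_lt_toDual]
  refine sum_congr rfl fun x _ => ?_
  rcases ht x.1 with h1 | h1 <;> rcases ht x.2 with h2 | h2 <;> simp [h1, h2]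

theorem two_mul_sum_inversions_comp_add [AddGroup ι] (s : ι → ℤ) (hs : ∀ i, s i = 1 ∨ s i = -1) :
    2 * ∑ κ, inversions (fun i => s (i + κ)) =
      Fintype.card ι * (#{i | s i = 1} * #{i | s i = -1}) := by
  have hpairs : ∀ κ : ι, inversions (fun i => s (i + κ)) + inversions (toDual ∘ fun i => s (i + κ))
      = #{i | s i = 1} * #{i | s i = -1} := fun κ => by
    rw [inversions_add_inversions_toDual, card_lt_eq_card_mul_card _ fun i => hs (i + κ),
      card_filter_comp_add_right, card_filter_comp_add_right]
  have hbalance : ∑ κ, inversions (fun i => s (i + κ)) =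
      ∑ κ, inversions (toDual ∘ fun i => s (i + κ)) := by
    have htwice : 2 * ∑ κ : ι, ((inversions (fun i => s (i + κ)) : ℤ)
        - inversions (toDual ∘ fun i => s (i + κ))) = 0 := by
      rw [mul_sum, sum_congr rfl fun κ _ =>
        two_mul_inversions_sub_inversions_toDual _ fun i => hs (i + κ)]
      exact sum_sum_sub_comp_add_eq_zero _ s
    zify
    rw [← sub_eq_zero, ← sum_sub_distrib]
    exact (mul_eq_zero.1 htwice).resolve_left two_ne_zero
  calc 2 * ∑ κ, inversions (fun i => s (i + κ))
      = ∑ κ, inversions (fun i => s (i + κ)) + ∑ κ, inversions (toDual ∘ fun i => s (i + κ)) := by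
        rw [two_mul, ← hbalance]
    _ = Fintype.card ι * (#{i | s i = 1} * #{i | s i = -1}) := by
        simp [← sum_add_distrib, hpairs]

end Inversions

section CyclicShift

variable {n : ℕ} [NeZero n] {α : Type*}

theorem iterate_comp_finRotate (s : Fin n → α) (k : ℕ) :
    (· ∘ finRotate n)^[k] s = fun i => s (i + (k : Fin n)) := by
  induction k generalizing s with
  | zero => simp
  | succ k ih =>
    rw [iterate_succ_apply, ih]
    ext i
    simp [add_assoc]

theorem isPeriodicPt_comp_finRotate (s : Fin n → α) : IsPeriodicPt (· ∘ finRotate n) n s := by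
  simp [IsPeriodicPt, IsFixedPt, iterate_comp_finRotate]

theorem sum_range_iterate_comp_finRotate {M : Type*} [AddCommMonoid M] (g : (Fin n → α) → M)
    (s : Fin n → α) :
    ∑ k ∈ range n, g ((· ∘ finRotate n)^[k] s) = ∑ κ : Fin n, g (fun i => s (i + κ)) := by
  rw [← Fin.sum_univ_eq_sum_range (fun k => g ((· ∘ finRotate n)^[k] s))]
  simp [iterate_comp_finRotate]

end CyclicShift

theorem multiset_inversions_cyclic_homomesy
    (a b : ℕ) (n : ℕ) (hn : n = a + b)
    (τ : (Fin n → ℤ) → (Fin n → ℤ))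
    (hτ : ∀ (s : Fin n → ℤ) (i : Fin n), τ s i = s (finRotate n i))
    (inv : (Fin n → ℤ) → ℕ)
    (hinv : ∀ s : Fin n → ℤ, inv s =
      (Finset.univ.filter (fun p : Fin n × Fin n => p.1 < p.2 ∧ s p.2 < s p.1)).card)
    (O : Finset (Fin n → ℤ))
    (hO : ∃ s : Fin n → ℤ,
      (∀ i, s i = 1 ∨ s i = -1) ∧
      (Finset.univ.filter (fun i => s i = -1)).card = a ∧
      (Finset.univ.filter (fun i => s i = 1)).card = b ∧
      (∀ y, y ∈ O ↔ ∃ k : ℕ, τ^[k] s = y)) :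
    (∑ s ∈ O, (inv s : ℚ)) / O.card = (a : ℚ) * (b : ℚ) / 2 := by
  obtain ⟨s, hs, ha, hb, hO⟩ := hO
  obtain rfl : τ = (· ∘ finRotate n) := funext fun s => funext (hτ s)
  obtain rfl : inv = inversions := funext hinv
  rcases Nat.eq_zero_or_pos n with rfl | hn0
  · obtain rfl : a = 0 := by omega
    simp [inversions]
  have : NeZero n := ⟨hn0.ne'⟩
  have hcard : (0 : ℚ) < #O := by exact_mod_cast card_pos.2 ⟨s, (hO s).2 ⟨0, rfl⟩⟩
  have horbit := card_nsmul_sum_range_iterate (isPeriodicPt_comp_finRotate s) hn0 hO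
    (fun y => (inversions y : ℚ))
  rw [sum_range_iterate_comp_finRotate (fun y => (inversions y : ℚ)) s] at horbit
  simp only [nsmul_eq_mul] at horbit
  have hrotations : 2 * ∑ κ : Fin n, (inversions (fun i => s (i + κ)) : ℚ) = n * (b * a) := by
    have := two_mul_sum_inversions_comp_add s hs
    rw [Fintype.card_fin, ha, hb] at this
    exact_mod_cast this
  rw [div_eq_div_iff hcard.ne' two_ne_zero]
  refine mul_left_cancel₀ (show (n : ℚ) ≠ 0 by exact_mod_cast hn0.ne') ?_
  linear_combination (-2) * horbit + (#O : ℚ) * hrotations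
end

section
/- Let n ≥ 1 and let V_n be the (n+1)-dimensional real vector space of homogeneous polynomials of degree n in ℝ[x,y]. Call p ∈ ℝ[x,y] invariant under time-evolution if for all real A, φ the function t ↦ p(A·sin(t−φ), A·cos(t−φ)) is constant in t, and 0-mesic if (1/2π)·∫₀^{2π} p(A·sin(t−φ), A·cos(t−φ)) dt = 0 for all real A, φ. If n is odd, then every element of V_n is 0-mesic. If n is even, then V_n is the direct sum of an n-dimensional subspace consisting of 0-mesic polynomials and the 1-dimensional subspace spanned by (x²+y²)^{n/2}, every element of which is invariant under time-evolution. -/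
open MvPolynomial Real

/-!
By homogeneity, the integral of `p` along the trajectory of amplitude `A` is `A ^ n` times the
integral `L p` of `p` over the unit circle (the phase `φ` drops out by periodicity), and `L` is
linear. For odd `n`, `p (-v) = -p v` makes `t ↦ p (sin t, cos t)` antiperiodic with antiperiod
`π`, so `L` vanishes on `V_n`. For even `n`, `q = (x² + y²) ^ (n / 2)` is constant on circles and
`L q = 2π ≠ 0`, so `V_n = (V_n ∩ ker L) ⊕ span {q}`, and `V_n ∩ ker L` has dimension
`(n + 1) - 1`.
-/

theorem Function.Antiperiodic.intervalIntegral_add_two_mul_eq_zero {E : Type*}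
    [NormedAddCommGroup E] [NormedSpace ℝ E] {f : ℝ → E} {c : ℝ}
    (hf : Function.Antiperiodic f c) (a : ℝ) : ∫ x in a..a + 2 * c, f x = 0 := by
  have shift : ∫ x in a..a + 2 * c, f x = ∫ x in a..a + 2 * c, f (x + c) := by
    rw [intervalIntegral.integral_comp_add_right, add_right_comm,
      hf.periodic_two_mul.intervalIntegral_add_eq (a + c) a]
  rw [funext hf, intervalIntegral.integral_neg, ← sub_eq_zero, sub_neg_eq_add, ← two_smul ℝ,
    smul_eq_zero] at shift
  exact shift.resolve_left two_ne_zero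

theorem MvPolynomial.IsHomogeneous.eval_smul {σ R : Type*} [CommSemiring R]
    {p : MvPolynomial σ R} {n : ℕ} (hp : p.IsHomogeneous n) (c : R) (v : σ → R) :
    eval (c • v) p = c ^ n * eval v p := by
  rw [eval_eq, eval_eq, Finset.mul_sum]
  refine Finset.sum_congr rfl fun d hd => ?_
  have hdeg : ∑ i ∈ d.support, d i = n := (hp.degree_eq_sum_deg_support hd).symm
  simp only [Pi.smul_apply, smul_eq_mul, mul_pow, Finset.prod_mul_distrib,
    Finset.prod_pow_eq_pow_sum, hdeg]
  ring

theorem MvPolynomial.finrank_homogeneousSubmodule {σ K : Type*} [Fintype σ] [Field K]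
    (n : ℕ) :
    Module.finrank K (homogeneousSubmodule σ K n) = (Fintype.card σ + n - 1).choose n := by
  classical
  have hdeg : {d : σ →₀ ℕ | d.degree = n} = ↑((Finset.univ : Finset σ).finsuppAntidiag n) := by
    ext d
    simp [Finsupp.degree_eq_sum]
  rw [homogeneousSubmodule_eq_finsupp_supported,
    (AddMonoidAlgebra.supportedEquivFinsupp (S := K) (R := K) _).finrank_eq, hdeg]
  simp [Finset.card_finsuppAntidiag_nat_eq_choose]

namespace Submodule

variable {K V : Type*} [Field K] [AddCommGroup V] [Module K V]
  {f : V →ₗ[K] K} {H : Submodule K V} {q : V}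

theorem inf_ker_sup_span_singleton (hqH : q ∈ H) (hq : f q ≠ 0) :
    H ⊓ LinearMap.ker f ⊔ span K {q} = H := by
  refine le_antisymm (sup_le inf_le_left ((span_singleton_le_iff_mem q H).mpr hqH)) fun p hp => ?_
  have hdecomp : p = (p - (f p / f q) • q) + (f p / f q) • q := (sub_add_cancel _ _).symm
  rw [hdecomp]
  refine add_mem_sup ⟨sub_mem hp (smul_mem _ _ hqH), ?_⟩ (mem_span_singleton.mpr ⟨_, rfl⟩)
  simp [div_mul_cancel₀ _ hq]

theorem inf_ker_inf_span_singleton (hq : f q ≠ 0) :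
    H ⊓ LinearMap.ker f ⊓ span K {q} = ⊥ := by
  refine eq_bot_iff.mpr fun p ⟨⟨_, hker⟩, hspan⟩ => ?_
  obtain ⟨c, rfl⟩ := mem_span_singleton.mp hspan
  have hc : c = 0 := by simpa [hq] using hker
  simp [hc]

theorem finrank_inf_ker_add_one [FiniteDimensional K H] (hqH : q ∈ H) (hq : f q ≠ 0) :
    Module.finrank K ↥(H ⊓ LinearMap.ker f) + 1 = Module.finrank K H := by
  have hq0 : q ≠ 0 := fun h => hq (by simp [h])
  have := finrank_sup_add_finrank_inf_eq (H ⊓ LinearMap.ker f) (span K {q})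
  rwa [inf_ker_sup_span_singleton hqH hq, inf_ker_inf_span_singleton hq, finrank_bot,
    finrank_span_singleton hq0, add_zero, eq_comm] at this

end Submodule

theorem continuous_eval_sin_cos (p : MvPolynomial (Fin 2) ℝ) :
    Continuous fun t => eval ![sin t, cos t] p :=
  (continuous_eval p).comp (by fun_prop)

theorem periodic_eval_sin_cos (p : MvPolynomial (Fin 2) ℝ) :
    Function.Periodic (fun t => eval ![sin t, cos t] p) (2 * π) := by
  simp [Function.Periodic, sin_add_two_pi, cos_add_two_pi]

theorem MvPolynomial.IsHomogeneous.antiperiodic_eval_sin_cos {p : MvPolynomial (Fin 2) ℝ}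
    {n : ℕ} (hp : p.IsHomogeneous n) (hn : Odd n) :
    Function.Antiperiodic (fun t => eval ![sin t, cos t] p) π := by
  intro t
  have hv : ![sin (t + π), cos (t + π)] = (-1 : ℝ) • ![sin t, cos t] := by
    ext i
    fin_cases i <;> simp [sin_add_pi, cos_add_pi]
  simp only [hv, hp.eval_smul, hn.neg_one_pow, neg_one_mul]

noncomputable def unitCircleIntegral : MvPolynomial (Fin 2) ℝ →ₗ[ℝ] ℝ where
  toFun p := ∫ t in 0..2 * π, eval ![sin t, cos t] p
  map_add' p q := by
    simp only [map_add]
    exact intervalIntegral.integral_add ((continuous_eval_sin_cos p).intervalIntegrable _ _)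
      ((continuous_eval_sin_cos q).intervalIntegrable _ _)
  map_smul' c p := by simp [intervalIntegral.integral_const_mul]

theorem MvPolynomial.IsHomogeneous.unitCircleIntegral_eq_zero {p : MvPolynomial (Fin 2) ℝ}
    {n : ℕ} (hp : p.IsHomogeneous n) (hn : Odd n) : unitCircleIntegral p = 0 := by
  simpa [unitCircleIntegral] using
    (hp.antiperiodic_eval_sin_cos hn).intervalIntegral_add_two_mul_eq_zero 0

theorem MvPolynomial.IsHomogeneous.integral_eval_trajectory {p : MvPolynomial (Fin 2) ℝ}
    {n : ℕ} (hp : p.IsHomogeneous n) (A φ : ℝ) :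
    ∫ t in 0..2 * π, eval ![A * sin (t - φ), A * cos (t - φ)] p
      = A ^ n * unitCircleIntegral p := by
  have hv : ∀ t, ![A * sin (t - φ), A * cos (t - φ)] = A • ![sin (t - φ), cos (t - φ)] := by
    intro t
    ext i
    fin_cases i <;> simp
  simp only [hv, hp.eval_smul, intervalIntegral.integral_const_mul,
    intervalIntegral.integral_comp_sub_right (fun t => eval ![sin t, cos t] p)]
  rw [zero_sub, sub_eq_neg_add, (periodic_eval_sin_cos p).intervalIntegral_add_eq (-φ) 0,
    zero_add]
  rfl

theorem isHomogeneous_sq_add_sq_pow (m : ℕ) :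
    (((X 0 : MvPolynomial (Fin 2) ℝ) ^ 2 + X 1 ^ 2) ^ m).IsHomogeneous (2 * m) :=
  ((isHomogeneous_X_pow 0 2).add (isHomogeneous_X_pow 1 2)).pow m

theorem unitCircleIntegral_sq_add_sq_pow (m : ℕ) :
    unitCircleIntegral (((X 0 : MvPolynomial (Fin 2) ℝ) ^ 2 + X 1 ^ 2) ^ m) = 2 * π := by
  simp [unitCircleIntegral]

theorem circle_action_homomesy_invariance_general
    (n : ℕ) :
    (Odd n → ∀ p ∈ homogeneousSubmodule (Fin 2) ℝ n, ∀ A φ : ℝ,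
        (1 / (2 * π)) * ∫ t in (0:ℝ)..(2 * π),
          eval (![A * Real.sin (t - φ), A * Real.cos (t - φ)]) p = 0) ∧
    (Even n → ∃ W : Submodule ℝ (MvPolynomial (Fin 2) ℝ),
        W ≤ homogeneousSubmodule (Fin 2) ℝ n ∧
        Module.finrank ℝ W = n ∧
        (∀ p ∈ W, ∀ A φ : ℝ,
          (1 / (2 * π)) * ∫ t in (0:ℝ)..(2 * π),
            eval (![A * Real.sin (t - φ), A * Real.cos (t - φ)]) p = 0) ∧
        homogeneousSubmodule (Fin 2) ℝ n
          = W ⊔ Submodule.span ℝ {((X 0 : MvPolynomial (Fin 2) ℝ) ^ 2 + X 1 ^ 2) ^ (n / 2)} ∧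
        W ⊓ Submodule.span ℝ {((X 0 : MvPolynomial (Fin 2) ℝ) ^ 2 + X 1 ^ 2) ^ (n / 2)} = ⊥ ∧
        Module.finrank ℝ
          (Submodule.span ℝ {((X 0 : MvPolynomial (Fin 2) ℝ) ^ 2 + X 1 ^ 2) ^ (n / 2)}) = 1 ∧
        (∀ p ∈ Submodule.span ℝ
            ({((X 0 : MvPolynomial (Fin 2) ℝ) ^ 2 + X 1 ^ 2) ^ (n / 2)} : Set (MvPolynomial (Fin 2) ℝ)),
          ∀ A φ t₁ t₂ : ℝ,
            eval (![A * Real.sin (t₁ - φ), A * Real.cos (t₁ - φ)]) p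
              = eval (![A * Real.sin (t₂ - φ), A * Real.cos (t₂ - φ)]) p)) := by
  constructor
  · intro hodd p hp A φ
    rw [hp.integral_eval_trajectory, hp.unitCircleIntegral_eq_zero hodd]
    simp
  · intro heven
    set q : MvPolynomial (Fin 2) ℝ := ((X 0 : MvPolynomial (Fin 2) ℝ) ^ 2 + X 1 ^ 2) ^ (n / 2)
    set H := homogeneousSubmodule (Fin 2) ℝ n
    have hqH : q ∈ H := by
      have := isHomogeneous_sq_add_sq_pow (n / 2)
      rwa [Nat.two_mul_div_two_of_even heven] at this
    have hq : unitCircleIntegral q ≠ 0 := by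
      rw [unitCircleIntegral_sq_add_sq_pow]
      positivity
    have hH : Module.finrank ℝ H = n + 1 := by
      simp [H, finrank_homogeneousSubmodule, add_comm 1 n, Nat.choose_succ_self_right]
    have : FiniteDimensional ℝ H := Module.finite_of_finrank_pos (by omega)
    refine ⟨H ⊓ LinearMap.ker unitCircleIntegral, inf_le_left, ?_, ?_,
      (Submodule.inf_ker_sup_span_singleton hqH hq).symm, Submodule.inf_ker_inf_span_singleton hq,
      finrank_span_singleton fun h => hq (by simp [h]), ?_⟩
    · have := Submodule.finrank_inf_ker_add_one hqH hq
      omega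
    · rintro p ⟨hp, hker⟩ A φ
      rw [hp.integral_eval_trajectory, hker]
      simp
    · intro p hp A φ t₁ t₂
      obtain ⟨c, rfl⟩ := Submodule.mem_span_singleton.mp hp
      simp [q, mul_pow, ← mul_add]

theorem circle_action_homomesy_invariance
    (n : ℕ) (hn : 1 ≤ n) :
    (Odd n → ∀ p ∈ homogeneousSubmodule (Fin 2) ℝ n, ∀ A φ : ℝ,
        (1 / (2 * π)) * ∫ t in (0:ℝ)..(2 * π),
          eval (![A * Real.sin (t - φ), A * Real.cos (t - φ)]) p = 0) ∧
    (Even n → ∃ W : Submodule ℝ (MvPolynomial (Fin 2) ℝ),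
        W ≤ homogeneousSubmodule (Fin 2) ℝ n ∧
        Module.finrank ℝ W = n ∧
        (∀ p ∈ W, ∀ A φ : ℝ,
          (1 / (2 * π)) * ∫ t in (0:ℝ)..(2 * π),
            eval (![A * Real.sin (t - φ), A * Real.cos (t - φ)]) p = 0) ∧
        homogeneousSubmodule (Fin 2) ℝ n
          = W ⊔ Submodule.span ℝ {((X 0 : MvPolynomial (Fin 2) ℝ) ^ 2 + X 1 ^ 2) ^ (n / 2)} ∧
        W ⊓ Submodule.span ℝ {((X 0 : MvPolynomial (Fin 2) ℝ) ^ 2 + X 1 ^ 2) ^ (n / 2)} = ⊥ ∧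
        Module.finrank ℝ
          (Submodule.span ℝ {((X 0 : MvPolynomial (Fin 2) ℝ) ^ 2 + X 1 ^ 2) ^ (n / 2)}) = 1 ∧
        (∀ p ∈ Submodule.span ℝ
            ({((X 0 : MvPolynomial (Fin 2) ℝ) ^ 2 + X 1 ^ 2) ^ (n / 2)} : Set (MvPolynomial (Fin 2) ℝ)),
          ∀ A φ t₁ t₂ : ℝ,
            eval (![A * Real.sin (t₁ - φ), A * Real.cos (t₁ - φ)]) p
              = eval (![A * Real.sin (t₂ - φ), A * Real.cos (t₂ - φ)]) p)) :=
  circle_action_homomesy_invariance_general n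
end

section
/- Let U = {(x,y) ∈ ℝ² : x ≠ 0, y ≠ 0, x + 1 ≠ 0, y + 1 ≠ 0, x + y + 1 ≠ 0}, let τ : U → U be given by τ(x,y) = (y, (y+1)/x), and let f(x,y) = log|x⁻¹ + x⁻²| (the quantity x⁻¹ + x⁻² is well-defined and nonzero throughout U). Then f is 0-mesic under the order-5 action of τ: for every (x,y) ∈ U, Σ_{i=0}^{4} f(τ^i(x,y)) = 0. Equivalently, writing h(z) = z⁻¹ + z⁻² and letting (x₁,…,x₅) be the five first coordinates of the τ-orbit of (x,y), one has h(x₁)·h(x₂)·h(x₃)·h(x₄)·h(x₅) = 1. -/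
/-!
Write `xₙ` for the first coordinate of `τⁿ(x, y)`. Then `x_{n+2} = (x_{n+1} + 1) / xₙ`, and `U`
is `τ`-invariant, so the Lyness relation `xₙ x_{n+2} = x_{n+1} + 1` holds along the whole orbit,
which is `5`-periodic. Multiplying the relation over one period gives `∏ (xᵢ + 1) = ∏ xᵢ²`, and
since `z⁻¹ + z⁻² = (z + 1) / z²`, this says exactly that `∏ h(xᵢ) = 1`; taking `log |·|` gives
the `0`-mesic identity.
-/

/-- The domain of the Lyness map. -/
def lynessDomain : Set (ℝ × ℝ) :=
  {p | p.1 ≠ 0 ∧ p.2 ≠ 0 ∧ p.1 + 1 ≠ 0 ∧ p.2 + 1 ≠ 0 ∧ p.1 + p.2 + 1 ≠ 0}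

/-- The Lyness map τ(x,y) = (y, (y+1)/x). -/
noncomputable def lynessMap (p : ℝ × ℝ) : ℝ × ℝ := (p.2, (p.2 + 1) / p.1)

open Finset Function

lemma inv_add_inv_sq_eq {K : Type*} [Field K] (v : K) : v⁻¹ + v⁻¹ ^ 2 = (v + 1) / v ^ 2 := by
  rcases eq_or_ne v 0 with rfl | hv
  · simp
  · field_simp

lemma inv_add_inv_sq_ne_zero {K : Type*} [Field K] {v : K} (hv : v ≠ 0) (hv1 : v + 1 ≠ 0) :
    v⁻¹ + v⁻¹ ^ 2 ≠ 0 := by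
  rw [inv_add_inv_sq_eq]
  exact div_ne_zero hv1 (pow_ne_zero 2 hv)

lemma Function.Periodic.prod_range_comp_add_one {M : Type*} [CommMonoid M] {f : ℕ → M} {N : ℕ}
    (hf : Periodic f N) : ∏ i ∈ range N, f (i + 1) = ∏ i ∈ range N, f i := by
  cases N with
  | zero => simp
  | succ n => rw [prod_range_succ, prod_range_succ', ← zero_add (n + 1), hf 0]

lemma prod_add_one_eq_prod_sq_of_lyness {R : Type*} [CommSemiring R] {a : ℕ → R} {N : ℕ}
    (hper : Periodic a N) (hrec : ∀ n, a n * a (n + 2) = a (n + 1) + 1) :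
    ∏ i ∈ range N, (a i + 1) = ∏ i ∈ range N, a i ^ 2 := by
  have hshift : ∏ i ∈ range N, a (i + 2) = ∏ i ∈ range N, a i := by
    rw [(hper.add_const 1).prod_range_comp_add_one, hper.prod_range_comp_add_one]
  calc ∏ i ∈ range N, (a i + 1)
      = ∏ i ∈ range N, (a (i + 1) + 1) := (hper.comp (· + 1)).prod_range_comp_add_one.symm
    _ = ∏ i ∈ range N, a i * a (i + 2) := by simp only [hrec]
    _ = ∏ i ∈ range N, a i ^ 2 := by rw [prod_mul_distrib, hshift, prod_pow, sq]

lemma mapsTo_lynessMap : Set.MapsTo lynessMap lynessDomain lynessDomain := by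
  rintro ⟨x, y⟩ ⟨hx, hy, hx1, hy1, hxy⟩
  refine ⟨hy, div_ne_zero hy1 hx, hy1, ?_, ?_⟩
  · have : (y + 1) / x + 1 = (x + y + 1) / x := by field_simp; ring
    simpa only [lynessMap, this] using div_ne_zero hxy hx
  · have : y + (y + 1) / x + 1 = (x + 1) * (y + 1) / x := by field_simp; ring
    simpa only [lynessMap, this] using div_ne_zero (mul_ne_zero hx1 hy1) hx

lemma isPeriodicPt_lynessMap_five {p : ℝ × ℝ} (hp : p ∈ lynessDomain) :
    IsPeriodicPt lynessMap 5 p := by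
  obtain ⟨x, y⟩ := p
  obtain ⟨hx, hy, hx1, hy1, hxy⟩ : x ≠ 0 ∧ y ≠ 0 ∧ x + 1 ≠ 0 ∧ y + 1 ≠ 0 ∧ x + y + 1 ≠ 0 := hp
  have h2 : lynessMap (y, (y + 1) / x) = ((y + 1) / x, (x + y + 1) / (x * y)) := by
    simp only [lynessMap, Prod.mk.injEq, true_and]; field_simp; ring
  have h3 : lynessMap ((y + 1) / x, (x + y + 1) / (x * y)) =
      ((x + y + 1) / (x * y), (x + 1) / y) := by
    simp only [lynessMap, Prod.mk.injEq, true_and]; field_simp; ring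
  have h4 : lynessMap ((x + y + 1) / (x * y), (x + 1) / y) = ((x + 1) / y, x) := by
    simp only [lynessMap, Prod.mk.injEq, true_and]; field_simp; ring
  have h5 : lynessMap ((x + 1) / y, x) = (x, y) := by
    simp only [lynessMap, Prod.mk.injEq, true_and]; field_simp
  change lynessMap (lynessMap (lynessMap (lynessMap (lynessMap (x, y))))) = (x, y)
  rw [show lynessMap (x, y) = (y, (y + 1) / x) from rfl, h2, h3, h4, h5]

lemma lynessMap_iterate_fst_add_two (p : ℝ × ℝ) (n : ℕ) :
    (lynessMap^[n + 2] p).1 = ((lynessMap^[n + 1] p).1 + 1) / (lynessMap^[n] p).1 := by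
  simp only [iterate_succ_apply', lynessMap]

lemma prod_lynessMap_iterate_inv_add_inv_sq {p : ℝ × ℝ} (hp : p ∈ lynessDomain) :
    ∏ i ∈ range 5, ((lynessMap^[i] p).1⁻¹ + ((lynessMap^[i] p).1⁻¹) ^ 2) = 1 := by
  set a : ℕ → ℝ := fun n ↦ (lynessMap^[n] p).1
  have ha : ∀ n, a n ≠ 0 := fun n ↦ (mapsTo_lynessMap.iterate n hp).1
  have hrec : ∀ n, a n * a (n + 2) = a (n + 1) + 1 := fun n ↦ by
    simp only [a, lynessMap_iterate_fst_add_two]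
    exact mul_div_cancel₀ _ (ha n)
  have hper : Periodic a 5 := fun n ↦ by
    simp only [a, iterate_add_apply, (isPeriodicPt_lynessMap_five hp).eq]
  simp only [inv_add_inv_sq_eq]
  rw [prod_div_distrib, prod_add_one_eq_prod_sq_of_lyness hper hrec,
    div_self (prod_ne_zero_iff.2 fun i _ ↦ pow_ne_zero 2 (ha i))]

theorem lyness_log_zero_mesic :
    (∀ p ∈ lynessDomain, p.1⁻¹ + (p.1⁻¹) ^ 2 ≠ 0) ∧
    (∀ p ∈ lynessDomain,
      ∑ i ∈ Finset.range 5,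
        Real.log |(lynessMap^[i] p).1⁻¹ + ((lynessMap^[i] p).1⁻¹) ^ 2| = 0) ∧
    (∀ p ∈ lynessDomain,
      ∏ i ∈ Finset.range 5,
        ((lynessMap^[i] p).1⁻¹ + ((lynessMap^[i] p).1⁻¹) ^ 2) = 1) := by
  have hne : ∀ p ∈ lynessDomain, p.1⁻¹ + p.1⁻¹ ^ 2 ≠ 0 := fun p hp ↦
    inv_add_inv_sq_ne_zero hp.1 hp.2.2.1
  refine ⟨hne, fun p hp ↦ ?_, fun p hp ↦ prod_lynessMap_iterate_inv_add_inv_sq hp⟩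
  simp only [Real.log_abs]
  rw [← Real.log_prod fun i _ ↦ hne _ (mapsTo_lynessMap.iterate i hp),
    prod_lynessMap_iterate_inv_add_inv_sq hp, Real.log_one]
end

section
/- Let V be a finite set, let Δ' : (V → ℚ) → (V → ℚ) be an invertible linear map, let s ∈ V, and let 1_s : V → ℚ denote the indicator function of s. Let S be a finite set of functions V → ℚ, let τ : S → S be a bijection, and let f : S → (V → ℚ) be a function such that τ(σ) = σ + 1_s − Δ'(f(σ)) for every σ ∈ S. Then f is homomesic under τ: for every τ-orbit O ⊆ S, the orbit average (1/#O)·Σ_{σ∈O} f(σ) equals the unique function f* : V → ℚ with Δ'(f*) = 1_s; in particular this average is the same for every orbit. -/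
theorem sandpile_firing_vector_homomesy
    {V : Type*} [Fintype V] [DecidableEq V]
    (Δ' : (V → ℚ) →ₗ[ℚ] (V → ℚ)) (hΔ' : Function.Bijective Δ')
    (s : V)
    {S : Type*} [Fintype S] (val : S → (V → ℚ)) (hval : Function.Injective val)
    (τ : Equiv.Perm S) (f : S → (V → ℚ))
    (hτ : ∀ σ : S, val (τ σ) = val σ + Pi.single s 1 - Δ' (f σ))
    (O : Finset S) (hO : ∃ x : S, ∀ y, y ∈ O ↔ ∃ k : ℕ, (⇑τ)^[k] x = y)
    (fstar : V → ℚ) (hfstar : Δ' fstar = Pi.single s 1) :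
    (O.card : ℚ)⁻¹ • ∑ σ ∈ O, f σ = fstar := by
  classical
  obtain ⟨x, hx⟩ := hO
  have hxO : x ∈ O := (hx x).mpr ⟨0, rfl⟩
  have hmem : ∀ σ ∈ O, τ σ ∈ O := by
    intro σ hσ
    obtain ⟨k, hk⟩ := (hx σ).mp hσ
    exact (hx (τ σ)).mpr ⟨k + 1, by rw [Function.iterate_succ_apply', hk]⟩
  have hinj : Function.Injective (⇑τ) := τ.injective
  have himage : O.image τ = O := by
    apply Finset.eq_of_subset_of_card_le
    · intro y hy
      obtain ⟨σ, hσ, rfl⟩ := Finset.mem_image.mp hy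
      exact hmem σ hσ
    · rw [Finset.card_image_of_injective _ hinj]
  have hsum : ∑ σ ∈ O, val (τ σ) = ∑ σ ∈ O, val σ := by
    rw [← Finset.sum_image (fun a _ b _ h => hinj h), himage]
  have hsum2 : ∑ σ ∈ O, val (τ σ)
      = ∑ σ ∈ O, val σ + (O.card : ℚ) • (Pi.single s 1 : V → ℚ) - Δ' (∑ σ ∈ O, f σ) := by
    rw [map_sum]
    rw [Finset.sum_congr rfl (fun σ _ => hτ σ)]
    rw [Finset.sum_sub_distrib, Finset.sum_add_distrib, Finset.sum_const, ← Nat.cast_smul_eq_nsmul ℚ]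
  have hkey : Δ' (∑ σ ∈ O, f σ) = (O.card : ℚ) • (Pi.single s 1 : V → ℚ) := by
    rw [hsum] at hsum2
    have h := hsum2.symm
    rw [add_sub_assoc, add_eq_left, sub_eq_zero] at h
    exact h.symm
  have h2 : Δ' (∑ σ ∈ O, f σ) = Δ' ((O.card : ℚ) • fstar) := by
    rw [map_smul, hfstar, hkey]
  have h3 : ∑ σ ∈ O, f σ = (O.card : ℚ) • fstar := hΔ'.injective h2
  have hcard : (O.card : ℚ) ≠ 0 := by
    exact_mod_cast Finset.card_ne_zero_of_mem hxO
  rw [h3, smul_smul, inv_mul_cancel₀ hcard, one_smul]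
end

section
/- Let P be a finite poset with n elements and let x_1, x_2, …, x_n be a linear extension of P, i.e., an enumeration of all elements of P such that x_i ≤ x_j implies i ≤ j. Then the composite map σ_{x_1} ∘ σ_{x_2} ∘ ⋯ ∘ σ_{x_n} (in which σ_{x_n} is applied first and σ_{x_1} last) coincides with the rowmotion operation Φ_J on J(P). -/
open scoped symmDiff

open scoped Classical in
/-- The toggle `σ_x` on order ideals (lower sets): send `I` to `I ∆ {x}`
if that is again a lower set, and to `I` otherwise. -/
noncomputable def toggle {P : Type*} [PartialOrder P] (x : P) (I : Set P) : Set P :=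
  if IsLowerSet (I ∆ {x}) then I ∆ {x} else I

/-- Rowmotion on order ideals: `I` maps to the lower set generated by the
minimal elements of the complement of `I`. -/
def rowmotion {P : Type*} [PartialOrder P] (I : Set P) : Set P :=
  {y | ∃ m, m ∉ I ∧ (∀ z ∉ I, z ≤ m → z = m) ∧ y ≤ m}

/-!
Split `P` into an initial segment `x_1, …, x_k` and the upper set `U` of the remaining elements
of the linear extension, and interpolate between `I` and its rowmotion `R` by the order ideal
`U.ite R I`, which agrees with `R` on `U` and with `I` off `U`. Toggling at `x_k` turns the
interpolant for `U` into the one for `U ∪ {x_k}`: if `x_k ∈ I`, it stays iff some element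
above it lies in `R`, which is exactly when `x_k ∈ R`; if `x_k ∉ I`, it enters iff everything
below it lies in `I`, i.e. iff `x_k` is minimal in the complement of `I`, again exactly when
`x_k ∈ R`. Running from `U = ∅` to `U = P` turns `I` into `R`.
-/

section

variable {P : Type*} [PartialOrder P]

section Toggle

variable {x p : P} {J : Set P}

theorem mem_toggle_of_ne (hpx : p ≠ x) : p ∈ toggle x J ↔ p ∈ J := by
  unfold toggle
  split_ifs <;> simp [Set.mem_symmDiff, hpx]

theorem self_mem_toggle_of_mem (hJ : IsLowerSet J) (hx : x ∈ J) :
    x ∈ toggle x J ↔ ∃ y ∈ J, x < y := by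
  have hdiff : J ∆ {x} = J \ {x} := by
    ext p; by_cases hp : p = x <;> simp [Set.mem_symmDiff, hp, hx]
  unfold toggle
  rw [hdiff]
  split_ifs with hlow
  · simp only [Set.mem_sdiff, Set.mem_singleton_iff, not_true_eq_false, and_false, false_iff]
    rintro ⟨y, hyJ, hxy⟩
    exact (hlow hxy.le ⟨hyJ, hxy.ne'⟩).2 rfl
  · simp only [hx, true_iff]
    by_contra! hmax
    refine hlow fun b a hab hb => ⟨hJ hab hb.1, ?_⟩
    rintro rfl
    exact hmax b hb.1 (hab.lt_of_ne (Ne.symm hb.2))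

theorem self_mem_toggle_of_notMem (hJ : IsLowerSet J) (hx : x ∉ J) :
    x ∈ toggle x J ↔ ∀ y < x, y ∈ J := by
  have hins : J ∆ {x} = insert x J := by
    ext p; by_cases hp : p = x <;> simp [Set.mem_symmDiff, hp, hx]
  unfold toggle
  rw [hins]
  split_ifs with hlow
  · simp only [Set.mem_insert_iff, true_or, true_iff]
    intro y hyx
    exact (hlow hyx.le (Set.mem_insert x J)).resolve_left hyx.ne
  · simp only [hx, false_iff]
    intro hbelow
    refine hlow fun b a hab hb => ?_
    rcases hb with rfl | hb
    · rcases hab.eq_or_lt with rfl | hlt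
      exacts [Set.mem_insert a J, Or.inr (hbelow a hlt)]
    · exact Or.inr (hJ hab hb)

end Toggle

section Rowmotion

variable {I : Set P} {v : P}

theorem isLowerSet_rowmotion (I : Set P) : IsLowerSet (rowmotion I) :=
  fun _ _ hba ⟨m, hmI, hmin, ham⟩ => ⟨m, hmI, hmin, hba.trans ham⟩

theorem mem_rowmotion_iff_exists_lt_of_mem (hv : v ∈ I) :
    v ∈ rowmotion I ↔ ∃ y ∈ rowmotion I, v < y := by
  constructor
  · rintro ⟨m, hmI, hmin, hvm⟩
    exact ⟨m, ⟨m, hmI, hmin, le_rfl⟩, hvm.lt_of_ne (ne_of_mem_of_not_mem hv hmI)⟩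
  · rintro ⟨y, hy, hvy⟩
    exact isLowerSet_rowmotion I hvy.le hy

theorem mem_rowmotion_iff_of_notMem (hv : v ∉ I) :
    v ∈ rowmotion I ↔ ∀ y < v, y ∈ I := by
  constructor
  · rintro ⟨m, -, hmin, hvm⟩ y hyv
    by_contra hy
    have hvm : v = m := hmin v hv hvm
    exact hyv.ne (hvm ▸ hmin y hy (hyv.le.trans hvm.le))
  · intro hbelow
    refine ⟨v, hv, fun z hz hzv => ?_, le_rfl⟩
    by_contra hne
    exact hz (hbelow z (hzv.lt_of_ne hne))

theorem isLowerSet_ite_rowmotion (hI : IsLowerSet I) {U : Set P} (hU : IsUpperSet U) :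
    IsLowerSet (U.ite (rowmotion I) I) := by
  rintro b a hab (⟨hbR, hbU⟩ | ⟨hbI, hbU⟩)
  · by_cases haU : a ∈ U
    · exact Or.inl ⟨isLowerSet_rowmotion I hab hbR, haU⟩
    · refine Or.inr ⟨?_, haU⟩
      by_contra haI
      obtain ⟨m, -, hmin, hbm⟩ := hbR
      have ham : a = m := hmin a haI (hab.trans hbm)
      exact haU (le_antisymm hab (ham ▸ hbm) ▸ hbU)
  · exact Or.inr ⟨hI hab hbI, fun haU => hbU (hU hab haU)⟩

theorem toggle_ite_rowmotion (hI : IsLowerSet I) {U : Set P} (hU : IsUpperSet U) (hvU : v ∉ U)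
    (hinsU : IsUpperSet (insert v U)) :
    toggle v (U.ite (rowmotion I) I) = (insert v U).ite (rowmotion I) I := by
  have hlow := isLowerSet_ite_rowmotion hI hU
  have habove : ∀ y, v < y → (y ∈ U.ite (rowmotion I) I ↔ y ∈ rowmotion I) := fun y hvy => by
    have hyU : y ∈ U := (hinsU hvy.le (Set.mem_insert v U)).resolve_left hvy.ne'
    simp [Set.ite, hyU]
  have hbelow : ∀ y, y < v → (y ∈ U.ite (rowmotion I) I ↔ y ∈ I) := fun y hyv => by
    have hyU : y ∉ U := fun hyU => hvU (hU hyv.le hyU)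
    simp [Set.ite, hyU]
  ext p
  by_cases hpv : p = v
  · subst p
    have hmem : v ∈ (insert v U).ite (rowmotion I) I ↔ v ∈ rowmotion I := by simp [Set.ite]
    rw [hmem]
    by_cases hv : v ∈ I
    · rw [self_mem_toggle_of_mem hlow (by simp [Set.ite, hvU, hv]),
        mem_rowmotion_iff_exists_lt_of_mem hv]
      exact exists_congr fun y => and_congr_left (habove y)
    · rw [self_mem_toggle_of_notMem hlow (by simp [Set.ite, hvU, hv]),
        mem_rowmotion_iff_of_notMem hv]
      exact forall_congr' fun y => imp_congr_right (hbelow y)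
  · rw [mem_toggle_of_ne hpv]
    simp [Set.ite, hpv]

end Rowmotion

theorem foldr_toggle_eq_ite_rowmotion {I : Set P} (hI : IsLowerSet I) :
    ∀ l : List P, l.Pairwise (fun a b => ¬ b ≤ a) → IsUpperSet {p | p ∈ l} →
      l.foldr toggle I = {p | p ∈ l}.ite (rowmotion I) I
  | [], _, _ => by simp
  | v :: l, hpw, hup => by
    rw [List.pairwise_cons] at hpw
    have hupl : IsUpperSet {p | p ∈ l} := fun a b hab ha => by
      rcases List.mem_cons.1 (hup hab (List.mem_cons_of_mem v ha)) with rfl | hb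
      exacts [absurd hab (hpw.1 a ha), hb]
    have hvl : v ∉ l := fun hv => hpw.1 v hv le_rfl
    have hins : insert v {p | p ∈ l} = {p | p ∈ v :: l} := by ext; simp
    rw [List.foldr_cons, foldr_toggle_eq_ite_rowmotion hI l hpw.2 hupl,
      toggle_ite_rowmotion hI hupl hvl (hins ▸ hup), hins]

end

theorem rowmotion_eq_toggle_linear_extension_general
    {P : Type*} [PartialOrder P]
    (n : ℕ)
    (x : Fin n → P) (hbij : Function.Bijective x)
    (hlin : ∀ i j : Fin n, x i ≤ x j → i ≤ j) :
    ∀ I : Set P, IsLowerSet I →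
      List.foldr toggle I (List.ofFn x) = rowmotion I := by
  intro I hI
  have hall : {p | p ∈ List.ofFn x} = Set.univ :=
    Set.eq_univ_of_forall fun p => List.mem_ofFn.2 (hbij.2 p)
  have hpw : (List.ofFn x).Pairwise (fun a b => ¬ b ≤ a) :=
    List.pairwise_ofFn.2 fun i j hij hji => (hlin j i hji).not_gt hij
  rw [foldr_toggle_eq_ite_rowmotion hI _ hpw (hall ▸ isUpperSet_univ), hall, Set.ite_univ]

theorem rowmotion_eq_toggle_linear_extension
    {P : Type*} [PartialOrder P] [Fintype P]
    (n : ℕ) (hcard : Fintype.card P = n)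
    (x : Fin n → P) (hbij : Function.Bijective x)
    (hlin : ∀ i j : Fin n, x i ≤ x j → i ≤ j) :
    ∀ I : Set P, IsLowerSet I →
      List.foldr toggle I (List.ofFn x) = rowmotion I :=
  rowmotion_eq_toggle_linear_extension_general n x hbij hlin
end

section
/- Let a, b be positive integers and n = a+b. The Stanley–Thomas word map A ↦ w(A) is a bijection from the set A([a]×[b]) of antichains of [a]×[b] onto the set of words in {−1,+1}^n having exactly a letters equal to −1 and b letters equal to +1; moreover, this bijection is equivariant with respect to rowmotion on antichains and the rightward cyclic shift on words: w(Φ_A(A)) = C_R(w(A)) for every antichain A, where C_R sends (w_1,…,w_n) to (w_n,w_1,…,w_{n−1}). -/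
open scoped Classical in
/-- Rowmotion on antichains of a finite poset: `A` maps to the set of minimal
elements of the complement of the order ideal generated by `A`. -/
noncomputable def rowmotionA {P : Type*} [PartialOrder P] [Fintype P]
    (A : Finset P) : Finset P :=
  Finset.univ.filter (fun y =>
    ¬ (∃ p ∈ A, y ≤ p) ∧ ∀ z, ¬ (∃ p ∈ A, z ≤ p) → z ≤ y → z = y)

open scoped Classical in
/-- The Stanley–Thomas word of an antichain of `[a] × [b]` (indices `0`-based):
for `i < a`, letter `i` is `+1` iff `A` meets positive fiber `i`;
for `a ≤ i < a+b`, letter `i` is `+1` iff `A` misses negative fiber `i - a`. -/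
noncomputable def stWord (a b : ℕ) (A : Finset (Fin a × Fin b)) (i : Fin (a + b)) : ℤ :=
  if (i : ℕ) < a then (if ∃ p ∈ A, (p.1 : ℕ) = (i : ℕ) then 1 else -1)
  else (if ∃ p ∈ A, (p.2 : ℕ) + a = (i : ℕ) then -1 else 1)

/-!
An antichain `A` of a product of two chains meets every fiber of either projection at most once,
and it is the graph of the unique order-reversing bijection between its two projections `S` and
`T`. Hence `A ↦ (S, T)` is a bijection onto the pairs with `#S = #T`. The word of `A` depends only
on `(S, T)` and has `(a - #S) + #T` letters `-1`, so the words with `a` letters `-1` are exactly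
those of antichains.

Rowmotion moves every fiber by one step: if `x ⋖ x'`, then `Φ(A)` meets the fiber over `x'` iff
`A` meets the fiber over `x`, in either coordinate. At the ends, `Φ(A)` has an element with second
coordinate `⊥` iff `A` has none with first coordinate `⊤`, and symmetrically. Read on the word,
these four facts say that the word is rotated one step to the right.
-/

open Finset

section Rowmotion

variable {P Q : Type*} [PartialOrder P] [Fintype P] [PartialOrder Q] [Fintype Q]

theorem mem_rowmotionA_iff {A : Finset P} {q : P} :
    q ∈ rowmotionA A ↔ Minimal (· ∉ lowerClosure (A : Set P)) q := by
  simp only [rowmotionA, mem_filter, mem_univ, true_and, Minimal, mem_lowerClosure, mem_coe]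
  exact and_congr_right fun _ => forall_congr' fun _ => imp_congr_right fun _ =>
    ⟨fun h hzq => (h hzq).ge, fun h hzq => le_antisymm hzq (h hzq)⟩

theorem exists_mem_rowmotionA_le {A : Finset P} {y : P} (hy : y ∉ lowerClosure (A : Set P)) :
    ∃ q ∈ rowmotionA A, q ≤ y := by
  obtain ⟨q, hqy, hq⟩ := exists_minimal_le_of_wellFoundedLT (· ∉ lowerClosure (A : Set P)) y hy
  exact ⟨q, mem_rowmotionA_iff.2 hq, hqy⟩

theorem image_rowmotionA_orderIso [DecidableEq Q] (e : P ≃o Q) (A : Finset P) :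
    (rowmotionA A).image e = rowmotionA (A.image e) := by
  ext q
  obtain ⟨p, rfl⟩ := e.surjective q
  simp [rowmotionA, e.surjective.forall, e.le_iff_le]

end Rowmotion

theorem Finset.strictAntiOn_card_filter_lt {γ : Type*} [LinearOrder γ] (T : Finset γ) :
    StrictAntiOn (fun t => #(T.filter (t < ·))) T := by
  intro t _ t' ht' htt'
  refine card_lt_card ((ssubset_iff_of_subset fun x hx => ?_).2 ⟨t', ?_, ?_⟩)
  · simp only [mem_filter] at hx ⊢
    exact ⟨hx.1, htt'.trans hx.2⟩
  · simpa [htt'] using ht'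
  · simp

namespace IsAntichain

variable {α β : Type*} [LinearOrder α] [LinearOrder β] {A A' : Finset (α × β)} {p q : α × β}

theorem snd_lt_of_fst_le (hA : IsAntichain (· ≤ ·) (A : Set (α × β))) (hp : p ∈ A) (hq : q ∈ A)
    (hpq : p ≠ q) (h : p.1 ≤ q.1) : q.2 < p.2 :=
  lt_of_not_ge fun h' => hA hp hq hpq ⟨h, h'⟩

theorem fst_lt_of_snd_le (hA : IsAntichain (· ≤ ·) (A : Set (α × β))) (hp : p ∈ A) (hq : q ∈ A)
    (hpq : p ≠ q) (h : p.2 ≤ q.2) : q.1 < p.1 :=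
  lt_of_not_ge fun h' => hA hp hq hpq ⟨h', h⟩

theorem injOn_fst (hA : IsAntichain (· ≤ ·) (A : Set (α × β))) :
    Set.InjOn Prod.fst (A : Set (α × β)) := fun p hp q hq h => by
  by_contra hpq
  exact lt_asymm (hA.snd_lt_of_fst_le hp hq hpq h.le) (hA.snd_lt_of_fst_le hq hp (Ne.symm hpq) h.ge)

theorem injOn_snd (hA : IsAntichain (· ≤ ·) (A : Set (α × β))) :
    Set.InjOn Prod.snd (A : Set (α × β)) := fun p hp q hq h => by
  by_contra hpq
  exact lt_asymm (hA.fst_lt_of_snd_le hp hq hpq h.le) (hA.fst_lt_of_snd_le hq hp (Ne.symm hpq) h.ge)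

theorem card_image_fst (hA : IsAntichain (· ≤ ·) (A : Set (α × β))) : #(A.image Prod.fst) = #A :=
  card_image_of_injOn hA.injOn_fst

theorem card_image_snd (hA : IsAntichain (· ≤ ·) (A : Set (α × β))) : #(A.image Prod.snd) = #A :=
  card_image_of_injOn hA.injOn_snd

/-- Both sides count the elements of `A` lying before `p` in the first coordinate, equivalently
after `p` in the second. -/
theorem card_filter_fst_lt_eq (hA : IsAntichain (· ≤ ·) (A : Set (α × β))) (hp : p ∈ A) :
    #((A.image Prod.fst).filter (· < p.1)) = #((A.image Prod.snd).filter (p.2 < ·)) := by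
  have hfilter : A.filter (fun q => q.1 < p.1) = A.filter (fun q => p.2 < q.2) := by
    ext q
    simp only [mem_filter, and_congr_right_iff]
    intro hq
    by_cases hqp : q = p
    · simp [hqp]
    exact ⟨hA.snd_lt_of_fst_le hq hp hqp ∘ le_of_lt,
      hA.fst_lt_of_snd_le hp hq (Ne.symm hqp) ∘ le_of_lt⟩
  rw [filter_image, filter_image, hfilter,
    card_image_of_injOn (hA.injOn_fst.mono (coe_subset.2 (filter_subset _ _))),
    card_image_of_injOn (hA.injOn_snd.mono (coe_subset.2 (filter_subset _ _)))]

theorem mem_iff (hA : IsAntichain (· ≤ ·) (A : Set (α × β))) (p : α × β) :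
    p ∈ A ↔ p.1 ∈ A.image Prod.fst ∧ p.2 ∈ A.image Prod.snd ∧
      #((A.image Prod.fst).filter (· < p.1)) = #((A.image Prod.snd).filter (p.2 < ·)) := by
  refine ⟨fun hp => ⟨mem_image_of_mem _ hp, mem_image_of_mem _ hp,
    hA.card_filter_fst_lt_eq hp⟩, fun ⟨h₁, h₂, hrank⟩ => ?_⟩
  obtain ⟨q, hq, hq₁⟩ := mem_image.1 h₁
  have hq₂ : q.2 = p.2 := (strictAntiOn_card_filter_lt _).injOn (mem_image_of_mem _ hq) h₂
    (by rw [← hrank, ← hq₁]; exact (hA.card_filter_fst_lt_eq hq).symm)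
  rwa [← Prod.ext hq₁ hq₂]

theorem eq_of_image_eq (hA : IsAntichain (· ≤ ·) (A : Set (α × β)))
    (hA' : IsAntichain (· ≤ ·) (A' : Set (α × β))) (h₁ : A.image Prod.fst = A'.image Prod.fst)
    (h₂ : A.image Prod.snd = A'.image Prod.snd) : A = A' := by
  ext p
  rw [hA.mem_iff, hA'.mem_iff, h₁, h₂]

end IsAntichain

theorem exists_isAntichain_image_eq {α β : Type*} [LinearOrder α] [LinearOrder β]
    (S : Finset α) (T : Finset β) (h : #T = #S) :
    ∃ A : Finset (α × β), IsAntichain (· ≤ ·) (A : Set (α × β)) ∧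
      A.image Prod.fst = S ∧ A.image Prod.snd = T := by
  set f := S.orderEmbOfFin rfl
  set g := T.orderEmbOfFin h
  refine ⟨univ.image fun k => (f k, g k.rev), ?_, ?_, ?_⟩
  · simp only [coe_image, coe_univ, Set.image_univ]
    rintro _ ⟨k, rfl⟩ _ ⟨l, rfl⟩ hne ⟨h₁, h₂⟩
    have hkl : k ≤ l := f.le_iff_le.1 h₁
    have hlk : l ≤ k := by simpa using g.le_iff_le.1 h₂
    exact hne (by rw [le_antisymm hkl hlk])
  · rw [image_image]
    exact S.image_orderEmbOfFin_univ rfl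
  · conv_rhs => rw [← T.image_orderEmbOfFin_univ h,
      ← image_univ_of_surjective Fin.rev_surjective, image_image]
    rw [image_image]
    rfl

section ProductOfChains

variable {α β : Type*} [LinearOrder α] [LinearOrder β] [Fintype α] [Fintype β]
  {A : Finset (α × β)}

theorem mem_image_fst_rowmotionA_iff_of_covBy (hA : IsAntichain (· ≤ ·) (A : Set (α × β)))
    {x x' : α} (hx : x ⋖ x') :
    x' ∈ (rowmotionA A).image Prod.fst ↔ x ∈ A.image Prod.fst := by
  simp only [mem_image]
  constructor
  · rintro ⟨q, hq, rfl⟩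
    have hq := mem_rowmotionA_iff.1 hq
    have hlt : (x, q.2) < q := Prod.mk_lt_mk_of_lt_of_le hx.lt le_rfl
    obtain ⟨p, hp, hle⟩ := mem_lowerClosure.1 (not_not.1 (hq.not_prop_of_lt hlt))
    refine ⟨p, hp, le_antisymm ?_ hle.1⟩
    by_contra! hxp
    exact hq.prop (mem_lowerClosure.2 ⟨p, hp, hx.ge_of_gt hxp, hle.2⟩)
  · rintro ⟨p, hp, rfl⟩
    have hout : (x', p.2) ∉ lowerClosure (A : Set (α × β)) := by
      rintro ⟨r, hr, hle⟩
      have hpr : p < r := lt_of_lt_of_le (Prod.mk_lt_mk_of_lt_of_le hx.lt le_rfl) hle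
      exact hA hp hr hpr.ne hpr.le
    obtain ⟨q, hq, hqle⟩ := exists_mem_rowmotionA_le hout
    refine ⟨q, hq, le_antisymm hqle.1 ?_⟩
    by_contra! hqx
    exact (mem_rowmotionA_iff.1 hq).prop (mem_lowerClosure.2 ⟨p, hp, hx.le_of_lt hqx, hqle.2⟩)

theorem mem_image_snd_rowmotionA_iff_of_isTop_of_isBot {x : α} {y : β} (hx : IsTop x)
    (hy : IsBot y) : y ∈ (rowmotionA A).image Prod.snd ↔ x ∉ A.image Prod.fst := by
  simp only [mem_image, not_exists, not_and]
  constructor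
  · rintro ⟨q, hq, rfl⟩ p hp rfl
    exact (mem_rowmotionA_iff.1 hq).prop (mem_lowerClosure.2 ⟨p, hp, hx _, hy _⟩)
  · intro hA
    have hout : (x, y) ∉ lowerClosure (A : Set (α × β)) := fun ⟨r, hr, hle⟩ =>
      hA r hr (le_antisymm (hx _) hle.1)
    obtain ⟨q, hq, hqle⟩ := exists_mem_rowmotionA_le hout
    exact ⟨q, hq, le_antisymm hqle.2 (hy _)⟩

theorem mem_image_snd_rowmotionA_iff_of_covBy (hA : IsAntichain (· ≤ ·) (A : Set (α × β)))
    {y y' : β} (hy : y ⋖ y') :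
    y' ∈ (rowmotionA A).image Prod.snd ↔ y ∈ A.image Prod.snd := by
  have hA' : IsAntichain (· ≤ ·) ((A.image OrderIso.prodComm : Finset (β × α)) : Set (β × α)) := by
    rw [coe_image]
    exact hA.image_iso _
  have h := mem_image_fst_rowmotionA_iff_of_covBy hA' hy
  rw [← image_rowmotionA_orderIso, image_image, image_image] at h
  exact h

theorem mem_image_fst_rowmotionA_iff_of_isBot_of_isTop {x : α} {y : β} (hx : IsBot x)
    (hy : IsTop y) : x ∈ (rowmotionA A).image Prod.fst ↔ y ∉ A.image Prod.snd := by
  have h := mem_image_snd_rowmotionA_iff_of_isTop_of_isBot (A := A.image OrderIso.prodComm) hy hx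
  rw [← image_rowmotionA_orderIso, image_image, image_image] at h
  exact h

end ProductOfChains

theorem Fin.card_filter_univ_add {m n : ℕ} (p : Fin (m + n) → Prop) [DecidablePred p] :
    #(univ.filter p) = #(univ.filter fun i => p (Fin.castAdd n i)) +
      #(univ.filter fun j => p (Fin.natAdd m j)) := by
  simp only [card_filter, Fin.sum_univ_add]

theorem val_finRotate {n : ℕ} (i : Fin n) : (finRotate n i : ℕ) = ((i : ℕ) + 1) % n := by
  cases n with
  | zero => exact i.elim0
  | succ n =>
    rw [coe_finRotate]
    split_ifs with h
    · simp [h]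
    · rw [Nat.mod_eq_of_lt]
      have := Fin.val_lt_last h
      omega

theorem Fin.castSucc_covBy_succ {n : ℕ} (x : Fin n) : x.castSucc ⋖ x.succ := by
  simp [Fin.covBy_iff]

theorem finRotate_castAdd_castSucc {m n : ℕ} (x : Fin m) :
    finRotate (m + 1 + n) (Fin.castAdd n x.castSucc) = Fin.castAdd n x.succ := by
  ext
  rw [val_finRotate]
  simp only [Fin.val_castAdd, Fin.val_castSucc, Fin.val_succ]
  exact Nat.mod_eq_of_lt (by omega)

theorem finRotate_castAdd_last {m n : ℕ} :
    finRotate (m + 1 + (n + 1)) (Fin.castAdd (n + 1) (Fin.last m)) = Fin.natAdd (m + 1) 0 := by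
  ext
  rw [val_finRotate]
  simp only [Fin.val_castAdd, Fin.val_last, Fin.val_natAdd, Fin.val_zero]
  exact Nat.mod_eq_of_lt (by omega)

theorem finRotate_natAdd_castSucc {m n : ℕ} (y : Fin n) :
    finRotate (m + (n + 1)) (Fin.natAdd m y.castSucc) = Fin.natAdd m y.succ := by
  ext
  rw [val_finRotate]
  simp only [Fin.val_natAdd, Fin.val_castSucc, Fin.val_succ]
  exact Nat.mod_eq_of_lt (by omega)

theorem finRotate_natAdd_last {m n : ℕ} :
    finRotate (m + 1 + (n + 1)) (Fin.natAdd (m + 1) (Fin.last n)) = Fin.castAdd (n + 1) 0 := by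
  ext
  rw [val_finRotate]
  simp only [Fin.val_natAdd, Fin.val_last, Fin.val_castAdd, Fin.val_zero]
  exact Nat.mod_eq_zero_of_dvd ⟨1, by omega⟩

theorem forall_eq_one_or_eq_neg_one {ι : Type*} [Fintype ι] {w : ι → ℤ}
    (h : #(univ.filter (w · = -1)) + #(univ.filter (w · = 1)) = Fintype.card ι) (i : ι) :
    w i = 1 ∨ w i = -1 := by
  classical
  have hdisj : Disjoint (univ.filter (w · = -1)) (univ.filter (w · = 1)) :=
    disjoint_filter.2 fun _ _ h₁ h₂ => by omega
  have hi := mem_univ i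
  rw [← eq_univ_of_card _ ((card_union_of_disjoint hdisj).trans h)] at hi
  simpa [or_comm] using hi

section Words

variable {a b : ℕ}

def fiberWord (S : Finset (Fin a)) (T : Finset (Fin b)) : Fin (a + b) → ℤ :=
  Fin.append (fun i => if i ∈ S then 1 else -1) (fun j => if j ∈ T then -1 else 1)

@[simp]
theorem fiberWord_castAdd (S : Finset (Fin a)) (T : Finset (Fin b)) (i : Fin a) :
    fiberWord S T (Fin.castAdd b i) = if i ∈ S then 1 else -1 :=
  Fin.append_left _ _ i

@[simp]
theorem fiberWord_natAdd (S : Finset (Fin a)) (T : Finset (Fin b)) (j : Fin b) :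
    fiberWord S T (Fin.natAdd a j) = if j ∈ T then -1 else 1 :=
  Fin.append_right _ _ j

theorem stWord_eq_fiberWord (A : Finset (Fin a × Fin b)) :
    stWord a b A = fiberWord (A.image Prod.fst) (A.image Prod.snd) := by
  funext i
  induction i using Fin.addCases <;> simp [stWord, Fin.ext_iff, add_comm]

theorem fiberWord_inj {S S' : Finset (Fin a)} {T T' : Finset (Fin b)} :
    fiberWord S T = fiberWord S' T' ↔ S = S' ∧ T = T' := by
  refine ⟨fun h => ⟨?_, ?_⟩, fun ⟨hS, hT⟩ => hS ▸ hT ▸ rfl⟩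
  · ext i
    have := congrFun h (Fin.castAdd b i)
    by_cases hi : i ∈ S <;> by_cases hi' : i ∈ S' <;> simp_all
  · ext j
    have := congrFun h (Fin.natAdd a j)
    by_cases hj : j ∈ T <;> by_cases hj' : j ∈ T' <;> simp_all

theorem card_filter_fiberWord_eq_neg_one (S : Finset (Fin a)) (T : Finset (Fin b)) :
    #(univ.filter (fiberWord S T · = -1)) = #Sᶜ + #T := by
  rw [Fin.card_filter_univ_add]
  congr 2 <;> ext <;> simp

theorem card_filter_fiberWord_eq_one (S : Finset (Fin a)) (T : Finset (Fin b)) :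
    #(univ.filter (fiberWord S T · = 1)) = #S + #Tᶜ := by
  rw [Fin.card_filter_univ_add]
  congr 2 <;> ext <;> simp

theorem eq_fiberWord {w : Fin (a + b) → ℤ} (hw : ∀ i, w i = 1 ∨ w i = -1) :
    w = fiberWord (univ.filter fun i => w (Fin.castAdd b i) = 1)
      (univ.filter fun j => w (Fin.natAdd a j) = -1) := by
  funext i
  induction i using Fin.addCases with
  | left i => rcases hw (Fin.castAdd b i) with h | h <;> simp [h]
  | right j => rcases hw (Fin.natAdd a j) with h | h <;> simp [h]

end Words

section StanleyThomas

variable {a b : ℕ}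

theorem stWord_mapsTo :
    Set.MapsTo (stWord a b)
      {A : Finset (Fin a × Fin b) | IsAntichain (· ≤ ·) (↑A : Set (Fin a × Fin b))}
      {w : Fin (a + b) → ℤ | #(univ.filter (w · = -1)) = a ∧ #(univ.filter (w · = 1)) = b} := by
  intro A hA
  have hS := card_le_univ (A.image Prod.fst)
  have hT := card_le_univ (A.image Prod.snd)
  simp only [Fintype.card_fin] at hS hT
  simp only [Set.mem_ofPred_eq, stWord_eq_fiberWord, card_filter_fiberWord_eq_neg_one,
    card_filter_fiberWord_eq_one, card_compl, Fintype.card_fin]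
  have := hA.card_image_fst
  have := hA.card_image_snd
  omega

theorem stWord_injOn :
    Set.InjOn (stWord a b)
      {A : Finset (Fin a × Fin b) | IsAntichain (· ≤ ·) (↑A : Set (Fin a × Fin b))} := by
  intro A hA A' hA' h
  rw [stWord_eq_fiberWord, stWord_eq_fiberWord] at h
  obtain ⟨h₁, h₂⟩ := fiberWord_inj.1 h
  exact hA.eq_of_image_eq hA' h₁ h₂

theorem stWord_surjOn :
    Set.SurjOn (stWord a b)
      {A : Finset (Fin a × Fin b) | IsAntichain (· ≤ ·) (↑A : Set (Fin a × Fin b))}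
      {w : Fin (a + b) → ℤ | #(univ.filter (w · = -1)) = a ∧ #(univ.filter (w · = 1)) = b} := by
  rintro w ⟨hneg, hpos⟩
  have hw := eq_fiberWord (forall_eq_one_or_eq_neg_one (by rw [hneg, hpos, Fintype.card_fin]))
  set S := univ.filter fun i => w (Fin.castAdd b i) = 1
  set T := univ.filter fun j => w (Fin.natAdd a j) = -1
  have hcard : #T = #S := by
    have hS := card_le_univ S
    rw [hw, card_filter_fiberWord_eq_neg_one, card_compl] at hneg
    simp only [Fintype.card_fin] at hS hneg
    omega
  obtain ⟨A, hA, h₁, h₂⟩ := exists_isAntichain_image_eq S T hcard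
  exact ⟨A, hA, by rw [stWord_eq_fiberWord, h₁, h₂, ← hw]⟩

theorem stWord_rowmotionA_finRotate (ha : 1 ≤ a) (hb : 1 ≤ b) {A : Finset (Fin a × Fin b)}
    (hA : IsAntichain (· ≤ ·) (A : Set (Fin a × Fin b))) (i : Fin (a + b)) :
    stWord a b (rowmotionA A) (finRotate (a + b) i) = stWord a b A i := by
  obtain ⟨a, rfl⟩ : ∃ a', a = a' + 1 := ⟨a - 1, by omega⟩
  obtain ⟨b, rfl⟩ : ∃ b', b = b' + 1 := ⟨b - 1, by omega⟩
  simp only [stWord_eq_fiberWord]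
  induction i using Fin.addCases with
  | left x =>
    induction x using Fin.lastCases with
    | last =>
      have key := mem_image_snd_rowmotionA_iff_of_isTop_of_isBot (A := A)
        (fun x => Fin.le_last x) (fun y => Fin.zero_le y)
      simp only [finRotate_castAdd_last, fiberWord_natAdd, fiberWord_castAdd, key]
      by_cases h : Fin.last a ∈ A.image Prod.fst <;> simp [h]
    | cast x =>
      simp only [finRotate_castAdd_castSucc, fiberWord_castAdd,
        mem_image_fst_rowmotionA_iff_of_covBy hA (Fin.castSucc_covBy_succ x)]
  | right y =>
    induction y using Fin.lastCases with
    | last =>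
      have key := mem_image_fst_rowmotionA_iff_of_isBot_of_isTop (A := A)
        (fun x => Fin.zero_le x) (fun y => Fin.le_last y)
      simp only [finRotate_natAdd_last, fiberWord_castAdd, fiberWord_natAdd, key]
      by_cases h : Fin.last b ∈ A.image Prod.snd <;> simp [h]
    | cast y =>
      simp only [finRotate_natAdd_castSucc, fiberWord_natAdd,
        mem_image_snd_rowmotionA_iff_of_covBy hA (Fin.castSucc_covBy_succ y)]

end StanleyThomas

theorem stanley_thomas_word_bijective_equivariant
    (a b : ℕ) (ha : 1 ≤ a) (hb : 1 ≤ b) :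
    Set.BijOn (stWord a b)
      {A : Finset (Fin a × Fin b) | IsAntichain (· ≤ ·) (↑A : Set (Fin a × Fin b))}
      {w : Fin (a + b) → ℤ |
        (Finset.univ.filter (fun i => w i = -1)).card = a ∧
        (Finset.univ.filter (fun i => w i = 1)).card = b} ∧
    ∀ A : Finset (Fin a × Fin b), IsAntichain (· ≤ ·) (↑A : Set (Fin a × Fin b)) →
      ∀ i : Fin (a + b), stWord a b (rowmotionA A) (finRotate (a + b) i) = stWord a b A i :=
  ⟨⟨stWord_mapsTo, stWord_injOn, stWord_surjOn⟩,
    fun _ hA => stWord_rowmotionA_finRotate ha hb hA⟩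
end

section
/- Let a, b be positive integers. Rowmotion on antichains of [a]×[b] satisfies Φ_A^{a+b} = id: applying Φ_A a+b times to any antichain of [a]×[b] returns that antichain. In particular, the size of every Φ_A-orbit divides a+b. -/
/-!
Encode an antichain `A` of `[a] × [b]` by a word of length `a + b`: its first `a` letters say
which rows of `A` are occupied, its last `b` letters which columns are empty. An antichain of a
product of chains is determined by its sets of occupied rows and columns (the `k`-th lowest row
carries the `k`-th highest column). Rowmotion moves every occupied row up by one and every
occupied column right by one, row `0` being occupied exactly when the top column was empty and
column `0` exactly when the top row was empty. So rowmotion rotates the word cyclically by one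
letter, and after `a + b` steps every antichain is back.
-/

open Finset

section Rowmotion

variable {P Q : Type*} [PartialOrder P] [Fintype P] [PartialOrder Q] [Fintype Q]

theorem mem_rowmotionA {A : Finset P} {y : P} :
    y ∈ rowmotionA A ↔ Minimal (· ∉ lowerClosure (A : Set P)) y := by
  simp only [rowmotionA, mem_filter, mem_univ, true_and, minimal_iff_forall_lt, mem_lowerClosure,
    mem_coe, lt_iff_le_and_ne, not_not]
  exact and_congr_right fun _ => forall_congr' fun z =>
    ⟨fun h ⟨hzy, hne⟩ => by_contra fun hz => hne (h hz hzy),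
      fun h hz hzy => by_contra fun hne => hz (h ⟨hzy, hne⟩)⟩

theorem rowmotionA_map (e : P ≃o Q) (A : Finset P) :
    rowmotionA (A.map e.toEquiv.toEmbedding) = (rowmotionA A).map e.toEquiv.toEmbedding := by
  ext y
  obtain ⟨x, rfl⟩ := e.surjective y
  simp only [mem_rowmotionA, minimal_iff_forall_lt, mem_map_equiv, mem_lowerClosure, coe_map]
  simp [e.surjective.forall]

theorem isAntichain_rowmotionA (A : Finset P) :
    IsAntichain (· ≤ ·) (rowmotionA A : Set P) := by
  convert setOfPred_minimal_antichain (· ∉ lowerClosure (A : Set P)) using 1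
  ext
  exact mem_rowmotionA

theorem IsAntichain.iterate_rowmotionA {A : Finset P} (hA : IsAntichain (· ≤ ·) (A : Set P)) :
    ∀ k, IsAntichain (· ≤ ·) (rowmotionA^[k] A : Set P)
  | 0 => hA
  | k + 1 => by rw [Function.iterate_succ_apply']; exact isAntichain_rowmotionA _

end Rowmotion

theorem Finset.injOn_card_filter_le {β : Type*} [LinearOrder β] (C : Finset β) :
    Set.InjOn (fun j => #{j' ∈ C | j ≤ j'}) C := by
  refine StrictAntiOn.injOn fun j hj _ _ hjj' => card_lt_card ⟨?_, fun hsub => ?_⟩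
  · exact monotone_filter_right C fun _ _ h => hjj'.le.trans h
  · exact (mem_filter.1 (hsub (mem_filter.2 ⟨hj, le_rfl⟩))).2.not_gt hjj'

section Grid

variable {α β : Type*} [LinearOrder α] [LinearOrder β]

theorem image_fst_map_prodComm (A : Finset (α × β)) :
    (A.map (OrderIso.prodComm : α × β ≃o β × α).toEquiv.toEmbedding).image Prod.fst =
      A.image Prod.snd := by
  ext; simp

theorem image_snd_map_prodComm (A : Finset (α × β)) :
    (A.map (OrderIso.prodComm : α × β ≃o β × α).toEquiv.toEmbedding).image Prod.snd =
      A.image Prod.fst := by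
  ext; simp

theorem IsAntichain.fst_le_iff_snd_le {s : Set (α × β)} (hs : IsAntichain (· ≤ ·) s)
    {p q : α × β} (hp : p ∈ s) (hq : q ∈ s) : q.1 ≤ p.1 ↔ p.2 ≤ q.2 := by
  obtain rfl | hpq := eq_or_ne p q
  · simp
  refine ⟨fun h₁ => le_of_not_gt fun h₂ => hs hq hp hpq.symm ⟨h₁, h₂.le⟩,
    fun h₂ => le_of_not_gt fun h₁ => hs hp hq hpq ⟨h₁.le, h₂⟩⟩

theorem IsAntichain.injOn_fst_s18 {s : Set (α × β)} (hs : IsAntichain (· ≤ ·) s) :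
    s.InjOn Prod.fst := fun _ hp _ hq h =>
  Prod.ext h (le_antisymm ((hs.fst_le_iff_snd_le hp hq).1 h.ge)
    ((hs.fst_le_iff_snd_le hq hp).1 h.le))

theorem IsAntichain.injOn_snd_s18 {s : Set (α × β)} (hs : IsAntichain (· ≤ ·) s) :
    s.InjOn Prod.snd := fun _ hp _ hq h =>
  Prod.ext (le_antisymm ((hs.fst_le_iff_snd_le hq hp).2 h.ge)
    ((hs.fst_le_iff_snd_le hp hq).2 h.le)) h

theorem IsAntichain.card_filter_image_fst_le_eq {A : Finset (α × β)}
    (hA : IsAntichain (· ≤ ·) (A : Set (α × β))) {p : α × β} (hp : p ∈ A) :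
    #{i ∈ A.image Prod.fst | i ≤ p.1} = #{j ∈ A.image Prod.snd | p.2 ≤ j} := by
  rw [filter_image, filter_image,
    card_image_of_injOn (hA.injOn_fst_s18.mono (by simp [Set.subset_def]; tauto)),
    card_image_of_injOn (hA.injOn_snd_s18.mono (by simp [Set.subset_def]; tauto))]
  exact congrArg card (filter_congr fun q hq => hA.fst_le_iff_snd_le hp hq)

theorem IsAntichain.subset_of_image_fst_eq_of_image_snd_eq {A B : Finset (α × β)}
    (hA : IsAntichain (· ≤ ·) (A : Set (α × β))) (hB : IsAntichain (· ≤ ·) (B : Set (α × β)))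
    (hfst : A.image Prod.fst = B.image Prod.fst) (hsnd : A.image Prod.snd = B.image Prod.snd) :
    A ⊆ B := by
  intro p hp
  obtain ⟨q, hq, hqp⟩ := mem_image.1 (hfst ▸ mem_image_of_mem Prod.fst hp)
  have hcard : #{j ∈ B.image Prod.snd | q.2 ≤ j} = #{j ∈ B.image Prod.snd | p.2 ≤ j} := by
    rw [← hB.card_filter_image_fst_le_eq hq, hqp, ← hfst, ← hsnd,
      hA.card_filter_image_fst_le_eq hp]
  have hsnd_eq : q.2 = p.2 := (B.image Prod.snd).injOn_card_filter_le
    (mem_image_of_mem _ hq) (hsnd ▸ mem_image_of_mem _ hp) hcard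
  rwa [← Prod.ext hqp hsnd_eq]

theorem IsAntichain.eq_of_image_fst_eq_of_image_snd_eq {A B : Finset (α × β)}
    (hA : IsAntichain (· ≤ ·) (A : Set (α × β))) (hB : IsAntichain (· ≤ ·) (B : Set (α × β)))
    (hfst : A.image Prod.fst = B.image Prod.fst) (hsnd : A.image Prod.snd = B.image Prod.snd) :
    A = B :=
  (hA.subset_of_image_fst_eq_of_image_snd_eq hB hfst hsnd).antisymm
    (hB.subset_of_image_fst_eq_of_image_snd_eq hA hfst.symm hsnd.symm)

variable [Fintype α] [Fintype β] {A : Finset (α × β)}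

theorem mem_rowmotionA_prod {x : α} {y : β} :
    (x, y) ∈ rowmotionA A ↔ (x, y) ∉ lowerClosure (A : Set (α × β)) ∧
      (∀ x' < x, (x', y) ∈ lowerClosure (A : Set (α × β))) ∧
      ∀ y' < y, (x, y') ∈ lowerClosure (A : Set (α × β)) := by
  rw [mem_rowmotionA, minimal_iff_forall_lt]
  simp only [not_not]
  refine and_congr_right fun _ => ⟨fun h => ⟨fun x' hx' => h (Prod.mk_lt_mk_iff_left.2 hx'),
    fun y' hy' => h (Prod.mk_lt_mk_iff_right.2 hy')⟩, ?_⟩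
  rintro ⟨hrow, hcol⟩ ⟨x', y'⟩ hlt
  rcases Prod.lt_iff.1 hlt with ⟨hx', hy'⟩ | ⟨hx', hy'⟩
  · exact (lowerClosure _).lower (Prod.mk_le_mk.2 ⟨le_rfl, hy'⟩) (hrow x' hx')
  · exact (lowerClosure _).lower (Prod.mk_le_mk.2 ⟨hx', le_rfl⟩) (hcol y' hy')

theorem mem_image_fst_rowmotionA_of_covBy (hA : IsAntichain (· ≤ ·) (A : Set (α × β)))
    {i i' : α} (h : i ⋖ i') :
    i' ∈ (rowmotionA A).image Prod.fst ↔ i ∈ A.image Prod.fst := by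
  constructor
  · intro h'
    obtain ⟨⟨i', y⟩, hy, rfl⟩ := mem_image.1 h'
    rw [mem_rowmotionA_prod] at hy
    obtain ⟨q, hq, hiq, hyq⟩ := mem_lowerClosure.1 (hy.2.1 i h.lt)
    have hqi' : q.1 < i' := lt_of_not_ge fun hi'q => hy.1 (mem_lowerClosure.2 ⟨q, hq, hi'q, hyq⟩)
    exact mem_image.2 ⟨q, hq, le_antisymm (h.le_of_lt hqi') hiq⟩
  · intro hi
    obtain ⟨q, hq, rfl⟩ := mem_image.1 hi
    have hout : (i', q.2) ∉ lowerClosure (A : Set (α × β)) := by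
      rintro ⟨r, hr, hi'r, hqr⟩
      exact hA hq hr (fun hqr' => (h.lt.trans_le hi'r).ne (congrArg Prod.fst hqr'))
        (Prod.mk_le_mk.2 ⟨h.le.trans hi'r, hqr⟩)
    obtain ⟨y, hyq, hy⟩ := exists_minimal_le_of_wellFoundedLT
      (fun y => (i', y) ∉ lowerClosure (A : Set (α × β))) _ hout
    refine mem_image.2 ⟨(i', y), mem_rowmotionA_prod.2 ⟨hy.prop, fun x' hx' => ?_,
      fun y' hy' => not_not.1 (hy.not_prop_of_lt hy')⟩, rfl⟩
    exact mem_lowerClosure.2 ⟨q, hq, h.le_of_lt hx', hyq⟩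

theorem mem_image_fst_rowmotionA_of_isBot_of_isTop {i : α} {j : β} (hi : IsBot i) (hj : IsTop j) :
    i ∈ (rowmotionA A).image Prod.fst ↔ j ∉ A.image Prod.snd := by
  constructor
  · intro hi' hj'
    obtain ⟨⟨_, y⟩, hy, rfl⟩ := mem_image.1 hi'
    obtain ⟨q, hq, rfl⟩ := mem_image.1 hj'
    exact (mem_rowmotionA_prod.1 hy).1 (mem_lowerClosure.2 ⟨q, hq, hi q.1, hj y⟩)
  · intro hj'
    have hout : (i, j) ∉ lowerClosure (A : Set (α × β)) := by
      rintro ⟨q, hq, -, hjq⟩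
      exact hj' (mem_image.2 ⟨q, hq, le_antisymm (hj q.2) hjq⟩)
    obtain ⟨y, -, hy⟩ := exists_minimal_le_of_wellFoundedLT
      (fun y => (i, y) ∉ lowerClosure (A : Set (α × β))) _ hout
    refine mem_image.2 ⟨(i, y), mem_rowmotionA_prod.2 ⟨hy.prop, fun x' hx' => ?_,
      fun y' hy' => not_not.1 (hy.not_prop_of_lt hy')⟩, rfl⟩
    exact absurd hx' (hi x').not_gt

theorem mem_image_snd_rowmotionA_of_covBy (hA : IsAntichain (· ≤ ·) (A : Set (α × β)))
    {j j' : β} (h : j ⋖ j') :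
    j' ∈ (rowmotionA A).image Prod.snd ↔ j ∈ A.image Prod.snd := by
  have hA' : IsAntichain (· ≤ ·) (A.map OrderIso.prodComm.toEquiv.toEmbedding : Set (β × α)) := by
    rw [coe_map]; exact hA.image_iso OrderIso.prodComm
  simpa only [rowmotionA_map, image_fst_map_prodComm] using
    mem_image_fst_rowmotionA_of_covBy hA' h

theorem mem_image_snd_rowmotionA_of_isTop_of_isBot {i : α} {j : β} (hi : IsTop i) (hj : IsBot j) :
    j ∈ (rowmotionA A).image Prod.snd ↔ i ∉ A.image Prod.fst := by
  simpa only [rowmotionA_map, image_fst_map_prodComm, image_snd_map_prodComm] using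
    mem_image_fst_rowmotionA_of_isBot_of_isTop
      (A := A.map OrderIso.prodComm.toEquiv.toEmbedding) hj hi

end Grid

section BoundaryWord

variable {a b : ℕ}

def boundaryWord (A : Finset (Fin a × Fin b)) : Fin (a + b) → Prop :=
  Fin.addCases (· ∈ A.image Prod.fst) (· ∉ A.image Prod.snd)

variable [NeZero a] [NeZero b]

theorem boundaryWord_rowmotionA_add_one {A : Finset (Fin a × Fin b)}
    (hA : IsAntichain (· ≤ ·) (A : Set (Fin a × Fin b))) (x : Fin (a + b)) :
    boundaryWord (rowmotionA A) (x + 1) ↔ boundaryWord A x := by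
  have hb := NeZero.pos b
  have isTop_of_succ {n : ℕ} (k : Fin n) (hk : k.val + 1 = n) : IsTop k :=
    fun l => Fin.le_def.2 (by omega)
  have isBot_zero {n : ℕ} [NeZero n] : IsBot (0 : Fin n) := Fin.zero_le
  induction x using Fin.addCases with
  | left i =>
    by_cases hi : i.val + 1 < a
    · have hx : Fin.castAdd b i + 1 = Fin.castAdd b ⟨i + 1, hi⟩ :=
        Fin.ext (by rw [Fin.val_add_one_of_lt' (by simp; omega)]; rfl)
      simp only [boundaryWord, hx, Fin.addCases_left]
      exact mem_image_fst_rowmotionA_of_covBy hA (Fin.covBy_iff.2 (Nat.covBy_iff_add_one_eq.2 rfl))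
    · have hx : Fin.castAdd b i + 1 = Fin.natAdd a 0 :=
        Fin.ext (by rw [Fin.val_add_one_of_lt' (by simp; omega)]; simp; omega)
      simp only [boundaryWord, hx, Fin.addCases_left, Fin.addCases_right]
      rw [mem_image_snd_rowmotionA_of_isTop_of_isBot (isTop_of_succ i (by omega)) isBot_zero,
        not_not]
  | right j =>
    by_cases hj : j.val + 1 < b
    · have hx : Fin.natAdd a j + 1 = Fin.natAdd a ⟨j + 1, hj⟩ :=
        Fin.ext (by rw [Fin.val_add_one_of_lt' (by simp; omega)]; simp; omega)
      simp only [boundaryWord, hx, Fin.addCases_right]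
      exact not_congr (mem_image_snd_rowmotionA_of_covBy hA
        (Fin.covBy_iff.2 (Nat.covBy_iff_add_one_eq.2 rfl)))
    · have hx : Fin.natAdd a j + 1 = Fin.castAdd b 0 := by
        refine Fin.ext ?_
        rw [Fin.val_add, Fin.val_one', Fin.val_natAdd, Nat.add_mod_mod,
          show a + j.val + 1 = a + b by omega, Nat.mod_self]
        rfl
      simp only [boundaryWord, hx, Fin.addCases_left, Fin.addCases_right]
      exact mem_image_fst_rowmotionA_of_isBot_of_isTop isBot_zero (isTop_of_succ j (by omega))

open Fin.NatCast in
theorem boundaryWord_iterate_rowmotionA {A : Finset (Fin a × Fin b)}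
    (hA : IsAntichain (· ≤ ·) (A : Set (Fin a × Fin b))) (k : ℕ) (x : Fin (a + b)) :
    boundaryWord (rowmotionA^[k] A) (x + k) ↔ boundaryWord A x := by
  induction k with
  | zero => simp
  | succ k ih =>
    rw [Function.iterate_succ_apply', Nat.cast_succ, ← add_assoc,
      boundaryWord_rowmotionA_add_one (hA.iterate_rowmotionA k), ih]

theorem IsAntichain.iterate_rowmotionA_add_eq_self {A : Finset (Fin a × Fin b)}
    (hA : IsAntichain (· ≤ ·) (A : Set (Fin a × Fin b))) : rowmotionA^[a + b] A = A := by
  have h x : boundaryWord (rowmotionA^[a + b] A) x ↔ boundaryWord A x := by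
    simpa using boundaryWord_iterate_rowmotionA hA (a + b) x
  refine (hA.iterate_rowmotionA _).eq_of_image_fst_eq_of_image_snd_eq hA ?_ ?_
  · ext i
    simpa [boundaryWord] using h (Fin.castAdd b i)
  · ext j
    simpa [boundaryWord] using not_congr (h (Fin.natAdd a j))

end BoundaryWord

theorem Function.card_eq_minimalPeriod {X : Type*} {f : X → X} {x : X} (hx : x ∈ periodicPts f)
    {O : Finset X} (hO : ∀ y, y ∈ O ↔ ∃ k, f^[k] x = y) : #O = minimalPeriod f x := by
  classical
  have hO' : O = (range (minimalPeriod f x)).image (f^[·] x) := by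
    ext y
    rw [hO, mem_image]
    refine ⟨?_, fun ⟨k, _, hk⟩ => ⟨k, hk⟩⟩
    rintro ⟨k, rfl⟩
    have hpos := minimalPeriod_pos_of_mem_periodicPts hx
    exact ⟨k % minimalPeriod f x, mem_range.2 (Nat.mod_lt _ hpos), iterate_mod_minimalPeriod_eq⟩
  rw [hO', card_image_of_injOn, card_range]
  simpa [Set.InjOn] using iterate_injOn_Iio_minimalPeriod (f := f) (x := x)

theorem antichain_rowmotion_order_divides
    (a b : ℕ) (ha : 1 ≤ a) (hb : 1 ≤ b) :
    (∀ A : Finset (Fin a × Fin b), IsAntichain (· ≤ ·) (↑A : Set (Fin a × Fin b)) →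
      rowmotionA^[a + b] A = A) ∧
    (∀ O : Finset (Finset (Fin a × Fin b)),
      (∃ A : Finset (Fin a × Fin b), IsAntichain (· ≤ ·) (↑A : Set (Fin a × Fin b)) ∧
        ∀ B, B ∈ O ↔ ∃ k : ℕ, rowmotionA^[k] A = B) →
      O.card ∣ (a + b)) := by
  have : NeZero a := ⟨by omega⟩
  have : NeZero b := ⟨by omega⟩
  refine ⟨fun A hA => hA.iterate_rowmotionA_add_eq_self, ?_⟩
  rintro O ⟨A, hA, hO⟩
  have hper : Function.IsPeriodicPt rowmotionA (a + b) A := hA.iterate_rowmotionA_add_eq_self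
  rw [Function.card_eq_minimalPeriod (Function.mk_mem_periodicPts (by omega) hper) hO]
  exact hper.minimalPeriod_dvd
end
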